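/- arXiv:1712.07191 — 5 statements merged into one kernel-verified Lean document; each statement's English description precedes it below -/
import Mathlib

section
/- Let G be a group, let A, B ≤ G be subgroups, let φ: B → A be a group isomorphism, and let k ≥ 1 be an integer. Then the following are equivalent: (1) there exist a sofic group Q and a surjective homomorphism Hig_k(G,φ) → Q such that the composition of the natural map ι: G → Hig_k(G,φ) with Hig_k(G,φ) → Q is injective; (2) for every finite subset S ⊆ G and all δ, ε > 0 there exist n ∈ ℕ, an (S,δ,n)-approximation ψ of G, and a permutation f ∈ Sym(n) with f^k = id such that d(ψ(b) ∘ f, f ∘ ψ(φ(b))) < ε for every b ∈ S ∩ B with φ(b) ∈ S. -/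
universe u

/-- The normalized Hamming distance on the symmetric group `Sym(n)`. -/
noncomputable def permDist {n : ℕ} (ρ σ : Equiv.Perm (Fin n)) : ℝ :=
  ((Finset.univ.filter fun i => ρ i ≠ σ i).card : ℝ) / n

/-- `ψ : G → Sym(n)` is an `(S, δ, n)`-approximation of `G`. -/
def IsApprox {G : Type*} [Group G] (S : Set G) (δ : ℝ) {n : ℕ}
    (ψ : G → Equiv.Perm (Fin n)) : Prop :=
  (∀ g ∈ S, ∀ h ∈ S, g * h ∈ S → permDist (ψ g * ψ h) (ψ (g * h)) < δ) ∧
  (∀ g ∈ S, g ≠ 1 → 1 - δ < permDist (ψ g) 1)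

/-- A group is sofic when for every finite subset `S` and every `δ > 0` there is an
`(S,δ,n)`-approximation for some `n`. -/
def IsSofic (G : Type*) [Group G] : Prop :=
  ∀ S : Set G, S.Finite → ∀ δ : ℝ, 0 < δ →
    ∃ (n : ℕ) (ψ : G → Equiv.Perm (Fin n)), IsApprox S δ ψ

variable (G : Type u) [Group G] (A B : Subgroup G) (φ : B ≃* A) (k : ℕ)

/-- The stable generator `t` inside the free product `G ∗ ⟨t⟩`. -/
def higT : Monoid.Coprod G (FreeGroup Unit) := Monoid.Coprod.inr (FreeGroup.of ())

/-- Defining relators of `Hig_k(G, φ)`:  `t^k` and `t⁻¹ b t φ(b)⁻¹` for `b ∈ B`. -/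
def higRels : Set (Monoid.Coprod G (FreeGroup Unit)) :=
  {higT G ^ k} ∪
    ⋃ b : B, {(higT G)⁻¹ * Monoid.Coprod.inl (b : G) * higT G *
      (Monoid.Coprod.inl ((φ b : G)) : Monoid.Coprod G (FreeGroup Unit))⁻¹}

/-- `Hig_k(G, φ) = ⟨G, t ∣ t^k = 1, b^t = φ(b) ∀ b ∈ B⟩`. -/
def Hig : Type u :=
  Monoid.Coprod G (FreeGroup Unit) ⧸ Subgroup.normalClosure (higRels G A B φ k)

instance : Group (Hig G A B φ k) :=
  inferInstanceAs (Group (Monoid.Coprod G (FreeGroup Unit) ⧸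
    Subgroup.normalClosure (higRels G A B φ k)))

/-- The natural map `ι : G → Hig_k(G, φ)`. -/
def higIota : G →* Hig G A B φ k :=
  (QuotientGroup.mk' (Subgroup.normalClosure (higRels G A B φ k))).comp Monoid.Coprod.inl

/-!
If `Q` is a sofic quotient of `Hig_k(G, φ)` into which `G` embeds, pull a sofic approximation
`Ψ` of `Q` back to `G`. The image `τ` of the stable letter satisfies `Ψ b * Ψ τ ≈ Ψ τ * Ψ (φ b)`
and `Ψ τ ^ k ≈ Ψ (τ ^ k) = Ψ 1 ≈ 1`; restricting `Ψ τ` to its points of period dividing `k`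
gives a permutation of order dividing `k` that differs from `Ψ τ` on few points.

Conversely, approximations for ever larger `S` and smaller `δ, ε` assemble, along an
ultrafilter, into an embedding of `G` into a metric ultraproduct of finite symmetric groups, where
the permutations `f` become an element `T` with `T ^ k = 1` conjugating `b` to `φ b`. Hence `ι`
extends to `Hig_k(G, φ)`, and its image, a subgroup of a metric ultraproduct of symmetric groups,
is sofic.
-/

open Equiv Function Filter

lemma hammingDist_comp_equiv {ι ι' β : Type*} [Fintype ι] [Fintype ι'] [DecidableEq β]
    (e : ι' ≃ ι) (x y : ι → β) : hammingDist (x ∘ e) (y ∘ e) = hammingDist x y :=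
  Finset.card_equiv e (by simp)

section NormHamming

variable {α β : Type*} [Fintype α] [DecidableEq α] [Fintype β] [DecidableEq β]

noncomputable def normHamming (ρ σ : Perm α) : ℝ :=
  hammingDist ⇑ρ ⇑σ / Fintype.card α

lemma permDist_eq_normHamming {n : ℕ} (ρ σ : Perm (Fin n)) :
    permDist ρ σ = normHamming ρ σ := by
  simp [permDist, normHamming, hammingDist]

lemma normHamming_le_one (ρ σ : Perm α) : normHamming ρ σ ≤ 1 :=
  div_le_one_of_le₀ (by exact_mod_cast hammingDist_le_card_fintype) (by positivity)

@[simp] lemma normHamming_self (ρ : Perm α) : normHamming ρ ρ = 0 := by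
  simp [normHamming]

lemma normHamming_comm (ρ σ : Perm α) : normHamming ρ σ = normHamming σ ρ := by
  simp only [normHamming, hammingDist_comm]

lemma normHamming_triangle (ρ τ σ : Perm α) :
    normHamming ρ σ ≤ normHamming ρ τ + normHamming τ σ := by
  unfold normHamming
  rw [← add_div]
  gcongr
  exact_mod_cast hammingDist_triangle _ _ _

lemma normHamming_le_of_ne_imp {ρ σ ρ' σ' : Perm α} (h : ∀ x, ρ x ≠ σ x → ρ' x ≠ σ' x) :
    normHamming ρ σ ≤ normHamming ρ' σ' := by
  unfold normHamming
  gcongr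
  exact Finset.card_le_card fun x => by simpa using h x

@[simp] lemma normHamming_mul_left (τ ρ σ : Perm α) :
    normHamming (τ * ρ) (τ * σ) = normHamming ρ σ := by
  simp only [normHamming, Perm.coe_mul]
  exact congrArg (fun d : ℕ => (d : ℝ) / _) (hammingDist_comp (fun _ => τ) fun _ => τ.injective)

@[simp] lemma normHamming_mul_right (ρ σ τ : Perm α) :
    normHamming (ρ * τ) (σ * τ) = normHamming ρ σ := by
  simp only [normHamming, Perm.coe_mul, hammingDist_comp_equiv]

lemma normHamming_inv_mul_one (ρ σ : Perm α) : normHamming (ρ⁻¹ * σ) 1 = normHamming ρ σ := by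
  rw [← normHamming_mul_left ρ, mul_inv_cancel_left, mul_one, normHamming_comm]

lemma normHamming_mul_one_le (ρ σ : Perm α) :
    normHamming (ρ * σ) 1 ≤ normHamming ρ 1 + normHamming σ 1 := by
  calc normHamming (ρ * σ) 1 ≤ normHamming (ρ * σ) (1 * σ) + normHamming σ 1 :=
        normHamming_triangle _ _ _
    _ = normHamming ρ 1 + normHamming σ 1 := by rw [normHamming_mul_right]

@[simp] lemma normHamming_permCongr (e : α ≃ β) (ρ σ : Perm α) :
    normHamming (e.permCongr ρ) (e.permCongr σ) = normHamming ρ σ := by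
  have h : hammingDist ⇑(e.permCongr ρ) ⇑(e.permCongr σ) = hammingDist ⇑ρ ⇑σ := by
    change hammingDist (fun x => e (ρ (e.symm x))) (fun x => e (σ (e.symm x))) = _
    rw [hammingDist_comp (fun _ => e) fun _ => e.injective]
    exact hammingDist_comp_equiv e.symm ρ σ
  simp only [normHamming, h, Fintype.card_congr e]

lemma one_sub_normHamming [Nonempty α] (ρ σ : Perm α) :
    1 - normHamming ρ σ = (Finset.univ.filter fun x => ρ x = σ x).card / Fintype.card α := by
  have h := Finset.card_filter_add_card_filter_not (s := Finset.univ) fun x => ρ x = σ x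
  rw [Finset.card_univ] at h
  rw [normHamming, hammingDist, eq_div_iff (by positivity), sub_mul, one_mul,
    div_mul_cancel₀ _ (by positivity), ← h]
  push_cast
  ring

end NormHamming

section Amplification

variable {α : Type*}

def diagPerm (ι : Type*) : Perm α →* Perm (ι → α) where
  toFun σ := Equiv.piCongrRight fun _ => σ
  map_one' := rfl
  map_mul' _ _ := rfl

@[simp] lemma diagPerm_apply (ι : Type*) (σ : Perm α) (f : ι → α) (j : ι) :
    diagPerm ι σ f j = σ (f j) := rfl

variable [Fintype α] [DecidableEq α] {ι : Type*} [Fintype ι] [DecidableEq ι]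

lemma card_filter_diagPerm_eq (σ τ : Perm α) :
    (Finset.univ.filter fun f : ι → α => diagPerm ι σ f = diagPerm ι τ f).card =
      (Finset.univ.filter fun x => σ x = τ x).card ^ Fintype.card ι := by
  have : (Finset.univ.filter fun f : ι → α => diagPerm ι σ f = diagPerm ι τ f) =
      Fintype.piFinset fun _ => Finset.univ.filter fun x => σ x = τ x := by
    ext f
    simp [funext_iff]
  rw [this, Fintype.card_piFinset, Finset.prod_const, Finset.card_univ]

lemma normHamming_diagPerm (σ τ : Perm α) :
    normHamming (diagPerm ι σ) (diagPerm ι τ) = 1 - (1 - normHamming σ τ) ^ Fintype.card ι := by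
  cases isEmpty_or_nonempty α
  · rw [Subsingleton.elim σ τ]
    simp
  · rw [eq_sub_iff_add_eq, ← eq_sub_iff_add_eq', one_sub_normHamming, one_sub_normHamming,
      card_filter_diagPerm_eq, Fintype.card_fun]
    push_cast
    rw [div_pow]

lemma normHamming_diagPerm_le (σ τ : Perm α) :
    normHamming (diagPerm ι σ) (diagPerm ι τ) ≤ Fintype.card ι * normHamming σ τ := by
  have hd := normHamming_le_one σ τ
  have := one_add_mul_le_pow (a := -normHamming σ τ) (by linarith) (Fintype.card ι)
  rw [mul_neg, ← sub_eq_add_neg, ← sub_eq_add_neg] at this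
  rw [normHamming_diagPerm]
  linarith

end Amplification

section PeriodicPart

variable {α : Type*}

lemma pow_apply_apply_eq_iff (k : ℕ) (σ : Perm α) (x : α) :
    (σ ^ k) (σ x) = σ x ↔ (σ ^ k) x = x := by
  rw [← Perm.mul_apply, ← pow_succ, pow_succ', Perm.mul_apply, σ.injective.eq_iff]

variable [DecidableEq α]

/-- `σ` on the points whose period divides `k`, the identity elsewhere. -/
def periodicPart (k : ℕ) (σ : Perm α) : Perm α :=
  Perm.ofSubtype (σ.subtypePerm (p := fun x => (σ ^ k) x = x) fun x => pow_apply_apply_eq_iff k σ x)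

lemma periodicPart_pow (k : ℕ) (σ : Perm α) : periodicPart k σ ^ k = 1 := by
  rw [periodicPart, ← map_pow, Perm.subtypePerm_pow]
  convert map_one Perm.ofSubtype
  ext ⟨x, hx⟩
  exact hx

lemma normHamming_periodicPart_le [Fintype α] (k : ℕ) (σ : Perm α) :
    normHamming (periodicPart k σ) σ ≤ normHamming (σ ^ k) 1 := by
  refine normHamming_le_of_ne_imp fun x hx hfix => hx ?_
  exact Perm.ofSubtype_subtypePerm_of_mem (p := fun x => (σ ^ k) x = x) _ hfix

end PeriodicPart

section Approximation

variable {α : Type*} [Fintype α] [DecidableEq α]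

def IsAlmostHom {Γ : Type*} [Mul Γ] (S : Set Γ) (η : ℝ) (ψ : Γ → Perm α) : Prop :=
  ∀ g ∈ S, ∀ h ∈ S, g * h ∈ S → normHamming (ψ g * ψ h) (ψ (g * h)) < η

lemma isApprox_iff {Γ : Type*} [Group Γ] {S : Set Γ} {δ : ℝ} {n : ℕ} {ψ : Γ → Perm (Fin n)} :
    IsApprox S δ ψ ↔
      IsAlmostHom S δ ψ ∧ ∀ g ∈ S, g ≠ 1 → 1 - δ < normHamming (ψ g) 1 := by
  simp only [IsApprox, IsAlmostHom, permDist_eq_normHamming]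

lemma exists_isApprox_of_perm {Γ : Type*} [Group Γ] {S : Set Γ} {δ : ℝ} {ψ : Γ → Perm α}
    (hψ : IsAlmostHom S δ ψ) (hsep : ∀ g ∈ S, g ≠ 1 → 1 - δ < normHamming (ψ g) 1) :
    ∃ (n : ℕ) (ψ' : Γ → Perm (Fin n)), IsApprox S δ ψ' := by
  set e := (Fintype.equivFin α).permCongrHom
  refine ⟨_, fun g => e (ψ g), isApprox_iff.2 ⟨fun g hg h hh hgh => ?_, fun g hg hg1 => ?_⟩⟩
  · rw [← map_mul]
    simpa only [e, permCongrHom_coe, normHamming_permCongr] using hψ g hg h hh hgh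
  · rw [← map_one e]
    simpa only [e, permCongrHom_coe, normHamming_permCongr] using hsep g hg hg1

/-- Tensor power trick: on `m`-tuples the multiplicativity defects grow at most `m`-fold while
the fixed-point ratios are raised to the `m`-th power. -/
lemma exists_isApprox_of_pow {Γ : Type*} [Group Γ] {S : Set Γ} {δ η : ℝ} {ψ : Γ → Perm α}
    (m : ℕ) (hψ : IsAlmostHom S η ψ) (hmη : m * η < δ)
    (hsep : ∀ g ∈ S, g ≠ 1 → (1 - normHamming (ψ g) 1) ^ m < δ) :
    ∃ (n : ℕ) (ψ' : Γ → Perm (Fin n)), IsApprox S δ ψ' := by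
  refine exists_isApprox_of_perm (ψ := fun g => (diagPerm (Fin m) (ψ g) : Perm (Fin m → α)))
    (fun g hg h hh hgh => ?_) (fun g hg hg1 => ?_)
  · have hdiag := normHamming_diagPerm_le (ι := Fin m) (ψ g * ψ h) (ψ (g * h))
    rw [map_mul, Fintype.card_fin] at hdiag
    calc _ ≤ m * normHamming (ψ g * ψ h) (ψ (g * h)) := hdiag
      _ ≤ m * η := by gcongr; exact (hψ g hg h hh hgh).le
      _ < δ := hmη
  · rw [← map_one (diagPerm (Fin m)), normHamming_diagPerm, Fintype.card_fin]
    linarith [hsep g hg hg1]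

lemma normHamming_map_one_lt {Q : Type*} [MulOneClass Q] {S : Set Q} {η : ℝ} {Ψ : Q → Perm α}
    (hΨ : IsAlmostHom S η Ψ) (h1 : (1 : Q) ∈ S) : normHamming (Ψ 1) 1 < η := by
  calc normHamming (Ψ 1) 1 = normHamming (Ψ 1 * Ψ 1) (1 * Ψ 1) := (normHamming_mul_right _ _ _).symm
    _ < η := by simpa using hΨ 1 h1 1 h1 (by rwa [one_mul])

lemma normHamming_pow_le {Q : Type*} [Monoid Q] {S : Set Q} {η : ℝ} {Ψ : Q → Perm α}
    (hΨ : IsAlmostHom S η Ψ) {τ : Q} {k : ℕ} (hτ : ∀ j ≤ k, τ ^ j ∈ S) :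
    ∀ j ≤ k, normHamming (Ψ τ ^ j) (Ψ (τ ^ j)) ≤ j * η + normHamming 1 (Ψ 1)
  | 0, _ => by simp
  | j + 1, hj => by
    have hτ1 : τ ∈ S := by simpa using hτ 1 (by omega)
    have hstep := hΨ _ (hτ j (by omega)) _ hτ1 (by simpa [← pow_succ] using hτ (j + 1) hj)
    have ih := normHamming_pow_le hΨ hτ j (by omega)
    calc normHamming (Ψ τ ^ (j + 1)) (Ψ (τ ^ (j + 1)))
        ≤ normHamming (Ψ τ ^ j * Ψ τ) (Ψ (τ ^ j) * Ψ τ) +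
            normHamming (Ψ (τ ^ j) * Ψ τ) (Ψ (τ ^ j * τ)) := by
          rw [← pow_succ, ← pow_succ]
          exact normHamming_triangle _ _ _
      _ ≤ (j + 1 : ℕ) * η + normHamming 1 (Ψ 1) := by
          rw [normHamming_mul_right]
          push_cast
          linarith

lemma normHamming_pow_one_lt {Q : Type*} [Monoid Q] {S : Set Q} {η : ℝ} {Ψ : Q → Perm α}
    (hΨ : IsAlmostHom S η Ψ) {τ : Q} {k : ℕ} (hτ : ∀ j ≤ k, τ ^ j ∈ S) (hτk : τ ^ k = 1) :
    normHamming (Ψ τ ^ k) 1 < (k + 2) * η := by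
  have h1 := normHamming_map_one_lt hΨ (by simpa using hτ 0 (Nat.zero_le k))
  have hpow := normHamming_pow_le hΨ hτ k le_rfl
  rw [hτk, normHamming_comm 1] at hpow
  calc normHamming (Ψ τ ^ k) 1 ≤ normHamming (Ψ τ ^ k) (Ψ 1) + normHamming (Ψ 1) 1 :=
        normHamming_triangle _ _ _
    _ < (k + 2) * η := by linarith

end Approximation

section Ultraproduct

variable {I : Type*} (U : Ultrafilter I) (α : I → Type*) [∀ i, Fintype (α i)]
  [∀ i, DecidableEq (α i)]

def infinitesimalPerms : Subgroup (∀ i, Perm (α i)) where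
  carrier := {a | ∀ ε > 0, ∀ᶠ i in U, normHamming (a i) 1 < ε}
  one_mem' ε hε := by simp [hε]
  mul_mem' {a b} ha hb ε hε := by
    filter_upwards [ha (ε / 2) (half_pos hε), hb (ε / 2) (half_pos hε)] with i hai hbi
    calc normHamming (a i * b i) 1 ≤ normHamming (a i) 1 + normHamming (b i) 1 :=
          normHamming_mul_one_le _ _
      _ < ε := by linarith
  inv_mem' {a} ha ε hε := by
    filter_upwards [ha ε hε] with i hai
    simpa using (normHamming_inv_mul_one (a i) 1).trans_lt hai

variable {U α}

lemma mem_infinitesimalPerms {a : ∀ i, Perm (α i)} :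
    a ∈ infinitesimalPerms U α ↔ ∀ ε > 0, ∀ᶠ i in U, normHamming (a i) 1 < ε :=
  Iff.rfl

instance : (infinitesimalPerms U α).Normal where
  conj_mem a ha g ε hε := by
    filter_upwards [ha ε hε] with i hai
    calc normHamming (g i * a i * (g i)⁻¹) 1
        = normHamming (g i * a i * (g i)⁻¹) (g i * 1 * (g i)⁻¹) := by rw [mul_one, mul_inv_cancel]
      _ < ε := by rwa [normHamming_mul_right, normHamming_mul_left]

variable (U α) in
abbrev PermUltraproduct : Type _ := (∀ i, Perm (α i)) ⧸ infinitesimalPerms U α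

namespace PermUltraproduct

lemma mk_eq_one_iff {a : ∀ i, Perm (α i)} :
    (a : PermUltraproduct U α) = 1 ↔ ∀ ε > 0, ∀ᶠ i in U, normHamming (a i) 1 < ε :=
  QuotientGroup.eq_one_iff a

lemma mk_eq_mk_iff {a b : ∀ i, Perm (α i)} :
    (a : PermUltraproduct U α) = b ↔ ∀ ε > 0, ∀ᶠ i in U, normHamming (a i) (b i) < ε := by
  simp only [QuotientGroup.eq, mem_infinitesimalPerms, Pi.mul_apply, Pi.inv_apply,
    normHamming_inv_mul_one]

lemma exists_pos_eventually_le_of_mk_ne_one {a : ∀ i, Perm (α i)}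
    (ha : (a : PermUltraproduct U α) ≠ 1) :
    ∃ c, 0 < c ∧ c ≤ 1 ∧ ∀ᶠ i in U, c ≤ normHamming (a i) 1 := by
  obtain ⟨c, hc, hev⟩ : ∃ c > 0, ¬ ∀ᶠ i in U, normHamming (a i) 1 < c := by
    by_contra! h
    exact ha (mk_eq_one_iff.2 h)
  refine ⟨min c 1, lt_min hc one_pos, min_le_right _ _, ?_⟩
  filter_upwards [Ultrafilter.eventually_not.2 hev] with i hi
  exact (min_le_left _ _).trans (not_lt.1 hi)

variable {Γ : Type*} [Group Γ]

def mkHom (ψ : ∀ i, Γ → Perm (α i))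
    (hψ : ∀ g h : Γ, ∀ ε > 0, ∀ᶠ i in U, normHamming (ψ i g * ψ i h) (ψ i (g * h)) < ε) :
    Γ →* PermUltraproduct U α :=
  MonoidHom.mk' (fun g => ((fun i => ψ i g : ∀ i, Perm (α i)) : PermUltraproduct U α))
    fun g h => (mk_eq_mk_iff.2 (hψ g h)).symm

lemma mkHom_apply (ψ : ∀ i, Γ → Perm (α i)) (hψ) (g : Γ) :
    mkHom ψ hψ g = ((fun i => ψ i g : ∀ i, Perm (α i)) : PermUltraproduct U α) :=
  rfl

lemma mkHom_injective (ψ : ∀ i, Γ → Perm (α i)) (hψ)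
    (hsep : ∀ g ≠ 1, ∃ c > 0, ∀ᶠ i in U, c ≤ normHamming (ψ i g) 1) :
    Injective (mkHom (U := U) ψ hψ) := by
  refine (injective_iff_map_eq_one _).2 fun g hg => by_contra fun hg1 => ?_
  obtain ⟨c, hc, hev⟩ := hsep g hg1
  obtain ⟨i, hlt, hle⟩ := ((mk_eq_one_iff.1 hg c hc).and hev).exists
  exact (not_lt.2 hle) hlt

/-- A finite piece of the embedding is read off at a single index and then amplified. -/
theorem isSofic_of_injective (χ : Γ →* PermUltraproduct U α) (hχ : Injective χ) : IsSofic Γ := by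
  intro S hS δ hδ
  obtain ⟨x, hx⟩ : ∃ x : Γ → ∀ i, Perm (α i), ∀ g, (x g : PermUltraproduct U α) = χ g :=
    ⟨fun g => (χ g).out, fun g => QuotientGroup.out_eq' _⟩
  have hmul (g h : Γ) : ∀ ε > 0, ∀ᶠ i in U, normHamming (x g i * x h i) (x (g * h) i) < ε :=
    (mk_eq_mk_iff (a := x g * x h)).1 (by rw [QuotientGroup.mk_mul, hx, hx, hx, map_mul])
  have hsep (g : Γ) (hg : g ∈ S \ {1}) :
      ∀ᶠ m in atTop, ∀ᶠ i in U, (1 - normHamming (x g i) 1) ^ m < δ := by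
    obtain ⟨c, hc0, hc1, hev⟩ := exists_pos_eventually_le_of_mk_ne_one (U := U) (a := x g)
      (by rw [hx, ← map_one χ]; exact hχ.ne hg.2)
    filter_upwards [(tendsto_pow_atTop_nhds_zero_of_lt_one (by linarith)
      (by linarith : 1 - c < 1)).eventually (gt_mem_nhds hδ)] with m hm
    filter_upwards [hev] with i hi
    exact (pow_le_pow_left₀ (sub_nonneg.2 (normHamming_le_one _ _)) (by linarith) m).trans_lt hm
  obtain ⟨m, hm⟩ := ((eventually_all_finite (hS.subset Set.sdiff_subset)).2 hsep).exists
  have hmδ : (m : ℝ) * (δ / (m + 1)) < δ := by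
    rw [mul_div_assoc', div_lt_iff₀ (by positivity)]
    nlinarith
  have halmost : ∀ᶠ i in U, IsAlmostHom S (δ / (m + 1)) (fun g => x g i) := by
    simp only [IsAlmostHom]
    refine (eventually_all_finite hS).2 fun g _ => (eventually_all_finite hS).2 fun h _ => ?_
    filter_upwards [hmul g h (δ / (m + 1)) (by positivity)] with i hi _ using hi
  have hsmall := (eventually_all_finite (hS.subset Set.sdiff_subset)).2 hm
  obtain ⟨i, halmost, hsmall⟩ := (halmost.and hsmall).exists
  exact exists_isApprox_of_pow m halmost hmδ fun g hg hg1 => hsmall g ⟨hg, hg1⟩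

end PermUltraproduct

end Ultraproduct

lemma eventually_atTop_mem_fst {Γ : Type*} (g : Γ) :
    ∀ᶠ i : Finset Γ × ℕ in atTop, g ∈ i.1 :=
  (eventually_ge_atTop (({g} : Finset Γ), 0)).mono fun _ hi => hi.1 (Finset.mem_singleton_self g)

lemma eventually_atTop_one_div_lt {Γ : Type*} {ε : ℝ} (hε : 0 < ε) :
    ∀ᶠ i : Finset Γ × ℕ in atTop, 1 / ((i.2 : ℝ) + 1) < ε := by
  obtain ⟨N, hN⟩ := exists_nat_one_div_lt hε
  filter_upwards [eventually_ge_atTop ((∅ : Finset Γ), N)] with i hi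
  refine lt_of_le_of_lt ?_ hN
  gcongr
  exact_mod_cast hi.2

lemma exists_isSofic_quotient_of_injective {H Γ : Type u} [Group H] [Group Γ] {I : Type*}
    {U : Ultrafilter I} {α : I → Type*} [∀ i, Fintype (α i)] [∀ i, DecidableEq (α i)]
    (ι : Γ →* H) (Φ : H →* PermUltraproduct U α) (hΦ : Injective (Φ.comp ι)) :
    ∃ (Q : Type u) (_ : Group Q) (p : H →* Q),
      Surjective p ∧ IsSofic Q ∧ Injective (p.comp ι) := by
  refine ⟨H ⧸ Φ.ker, inferInstance, QuotientGroup.mk' Φ.ker, QuotientGroup.mk'_surjective _,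
    PermUltraproduct.isSofic_of_injective _ (QuotientGroup.kerLift_injective Φ), ?_⟩
  exact Injective.of_comp (f := QuotientGroup.kerLift Φ) hΦ

section Higman

def higMk : Monoid.Coprod G (FreeGroup Unit) →* Hig G A B φ k :=
  QuotientGroup.mk' _

def higStable : Hig G A B φ k :=
  higMk G A B φ k (higT G)

variable {G A B φ k}

lemma higMk_eq_one_iff {x : Monoid.Coprod G (FreeGroup Unit)} :
    higMk G A B φ k x = 1 ↔ x ∈ Subgroup.normalClosure (higRels G A B φ k) :=
  QuotientGroup.eq_one_iff x

lemma higIota_apply (g : G) : higIota G A B φ k g = higMk G A B φ k (Monoid.Coprod.inl g) :=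
  rfl

lemma higStable_pow : higStable G A B φ k ^ k = 1 := by
  rw [higStable, ← map_pow, higMk_eq_one_iff]
  exact Subgroup.subset_normalClosure (Or.inl rfl)

lemma higIota_mul_higStable (b : B) :
    higIota G A B φ k b * higStable G A B φ k = higStable G A B φ k * higIota G A B φ k (φ b) := by
  have hrel : (higT G)⁻¹ * Monoid.Coprod.inl (b : G) * higT G *
      (Monoid.Coprod.inl (φ b : G))⁻¹ ∈ Subgroup.normalClosure (higRels G A B φ k) :=
    Subgroup.subset_normalClosure (Or.inr (Set.mem_iUnion.2 ⟨b, rfl⟩))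
  rw [higIota_apply, higIota_apply, higStable, ← map_mul, ← map_mul, ← mul_inv_eq_one, ← map_inv,
    ← map_mul, higMk_eq_one_iff]
  convert Subgroup.normalClosure_normal.conj_mem _ hrel (higT G) using 1
  group

def higLift {M : Type*} [Group M] (π : G →* M) (τ : M) (hτ : τ ^ k = 1)
    (hrel : ∀ b : B, π b * τ = τ * π (φ b)) : Hig G A B φ k →* M :=
  QuotientGroup.lift _ (Monoid.Coprod.lift π (FreeGroup.lift fun _ => τ)) <|
    Subgroup.normalClosure_le_normal <| by
      rintro x (hx | hx)
      · rw [Set.mem_singleton_iff.1 hx]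
        simp [higT, hτ]
      · obtain ⟨b, hb⟩ := Set.mem_iUnion.1 hx
        rw [Set.mem_singleton_iff.1 hb]
        simp only [higT, SetLike.mem_coe, MonoidHom.mem_ker, map_mul, map_inv,
          Monoid.Coprod.lift_apply_inl, Monoid.Coprod.lift_apply_inr, FreeGroup.lift_apply_of,
          mul_assoc τ⁻¹, hrel b]
        group

lemma higLift_comp_higIota {M : Type*} [Group M] (π : G →* M) (τ : M) (hτ : τ ^ k = 1)
    (hrel : ∀ b : B, π b * τ = τ * π (φ b)) :
    (higLift π τ hτ hrel).comp (higIota G A B φ k) = π := by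
  ext g
  exact Monoid.Coprod.lift_apply_inl π (FreeGroup.lift fun _ : Unit => τ) g

theorem exists_almostConjugating_approx_of_isSofic {Q : Type*} [Group Q] (hQ : IsSofic Q)
    {π : G →* Q} (hπ : Injective π) {τ : Q} (hτ : τ ^ k = 1)
    (hrel : ∀ b : B, π b * τ = τ * π (φ b))
    {S : Set G} (hS : S.Finite) {δ ε : ℝ} (hδ : 0 < δ) (hε : 0 < ε) :
    ∃ (n : ℕ) (ψ : G → Perm (Fin n)) (f : Perm (Fin n)),
      IsApprox S δ ψ ∧ f ^ k = 1 ∧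
      ∀ b : B, (b : G) ∈ S → (φ b : G) ∈ S → permDist (ψ b * f) (f * ψ (φ b)) < ε := by
  set η := min δ (ε / (2 * k + 6))
  have hη : 0 < η := lt_min hδ (by positivity)
  have hηε : (2 * k + 6) * η ≤ ε := (le_div_iff₀' (by positivity)).1 (min_le_right _ _)
  set S' : Set Q := π '' S ∪ (τ ^ ·) '' Set.Iic k ∪ {τ} ∪ (π · * τ) '' S
  have hπS {g : G} (hg : g ∈ S) : π g ∈ S' := Or.inl (Or.inl (Or.inl ⟨g, hg, rfl⟩))
  have hpowS (j : ℕ) (hj : j ≤ k) : τ ^ j ∈ S' := Or.inl (Or.inl (Or.inr ⟨j, hj, rfl⟩))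
  have hτS : τ ∈ S' := Or.inl (Or.inr rfl)
  have hπτS {g : G} (hg : g ∈ S) : π g * τ ∈ S' := Or.inr ⟨g, hg, rfl⟩
  have hS' : S'.Finite :=
    (((hS.image _).union ((Set.finite_Iic k).image _)).union (Set.finite_singleton τ)).union
      (hS.image _)
  obtain ⟨n, Ψ, hΨ⟩ := hQ S' hS' η hη
  obtain ⟨hΨmul, hΨsep⟩ := isApprox_iff.1 hΨ
  set f := periodicPart k (Ψ τ)
  have hf : normHamming f (Ψ τ) < (k + 2) * η :=
    (normHamming_periodicPart_le k _).trans_lt (normHamming_pow_one_lt hΨmul hpowS hτ)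
  refine ⟨n, Ψ ∘ π, f, isApprox_iff.2 ⟨fun g hg h hh hgh => ?_, fun g hg hg1 => ?_⟩,
    periodicPart_pow k _, fun b hb hφb => ?_⟩
  · simp only [comp_apply, map_mul]
    exact (hΨmul _ (hπS hg) _ (hπS hh) (map_mul π g h ▸ hπS hgh)).trans_le (min_le_left _ _)
  · show 1 - δ < normHamming (Ψ (π g)) 1
    have := hΨsep _ (hπS hg) ((map_ne_one_iff π hπ).2 hg1)
    linarith [min_le_left δ (ε / (2 * k + 6))]
  · have h₁ := hΨmul _ (hπS hb) _ hτS (hπτS hb)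
    have h₂ := hΨmul _ hτS _ (hπS hφb) (hrel b ▸ hπτS hb)
    rw [hrel b] at h₁
    rw [permDist_eq_normHamming]
    calc normHamming (Ψ (π b) * f) (f * Ψ (π (φ b)))
        ≤ normHamming (Ψ (π b) * f) (Ψ (π b) * Ψ τ) +
            (normHamming (Ψ (π b) * Ψ τ) (Ψ (τ * π (φ b))) +
              (normHamming (Ψ (τ * π (φ b))) (Ψ τ * Ψ (π (φ b))) +
                normHamming (Ψ τ * Ψ (π (φ b))) (f * Ψ (π (φ b))))) := by
          refine (normHamming_triangle _ _ _).trans (add_le_add le_rfl ?_)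
          refine (normHamming_triangle _ _ _).trans (add_le_add le_rfl ?_)
          exact normHamming_triangle _ _ _
      _ < (k + 2) * η + (η + (η + (k + 2) * η)) := by
          rw [normHamming_mul_left, normHamming_mul_right, normHamming_comm (Ψ (τ * _)),
            normHamming_comm (Ψ τ)]
          gcongr
      _ ≤ ε := by linarith

theorem exists_hom_permUltraproduct_of_almostConjugating
    (h : ∀ S : Set G, S.Finite → ∀ δ ε : ℝ, 0 < δ → 0 < ε →
      ∃ (n : ℕ) (ψ : G → Perm (Fin n)) (f : Perm (Fin n)),
        IsApprox S δ ψ ∧ f ^ k = 1 ∧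
        ∀ b : B, (b : G) ∈ S → (φ b : G) ∈ S → permDist (ψ b * f) (f * ψ (φ b)) < ε) :
    ∃ (U : Ultrafilter (Finset G × ℕ)) (n : Finset G × ℕ → ℕ)
      (Φ : Hig G A B φ k →* PermUltraproduct U fun i => Fin (n i)),
      Injective (Φ.comp (higIota G A B φ k)) := by
  classical
  choose n ψ f hψ hf hconj using fun i : Finset G × ℕ =>
    h i.1 i.1.finite_toSet (1 / (i.2 + 1)) (1 / (i.2 + 1)) (by positivity) (by positivity)
  let U := Ultrafilter.of (atTop : Filter (Finset G × ℕ))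
  have hU {p : Finset G × ℕ → Prop} (hp : ∀ᶠ i in atTop, p i) : ∀ᶠ i in U, p i :=
    Ultrafilter.of_le _ hp
  have hmul (g h : G) (ε : ℝ) (hε : 0 < ε) :
      ∀ᶠ i in U, normHamming (ψ i g * ψ i h) (ψ i (g * h)) < ε := hU <| by
    filter_upwards [eventually_atTop_mem_fst g, eventually_atTop_mem_fst h,
      eventually_atTop_mem_fst (g * h), eventually_atTop_one_div_lt hε] with i hg hh hgh hi
    exact ((isApprox_iff.1 (hψ i)).1 g hg h hh hgh).trans hi
  let Ψ := PermUltraproduct.mkHom ψ hmul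
  have hΨ : Injective Ψ := PermUltraproduct.mkHom_injective ψ hmul fun g hg => ⟨1 / 2, by norm_num,
    hU <| by
      filter_upwards [eventually_atTop_mem_fst g,
        eventually_atTop_one_div_lt (by norm_num : (0 : ℝ) < 1 / 2)] with i hgi hi
      linarith [(isApprox_iff.1 (hψ i)).2 g hgi hg]⟩
  let T : PermUltraproduct U fun i => Fin (n i) := QuotientGroup.mk f
  have hT : T ^ k = 1 := by
    rw [← QuotientGroup.mk_pow, show f ^ k = 1 from funext hf, QuotientGroup.mk_one]
  have hrel (b : B) : Ψ b * T = T * Ψ (φ b) := by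
    rw [PermUltraproduct.mkHom_apply, PermUltraproduct.mkHom_apply, ← QuotientGroup.mk_mul,
      ← QuotientGroup.mk_mul, PermUltraproduct.mk_eq_mk_iff]
    intro ε hε
    refine hU ?_
    filter_upwards [eventually_atTop_mem_fst (b : G), eventually_atTop_mem_fst (φ b : G),
      eventually_atTop_one_div_lt hε] with i hb hφb hi
    rw [← permDist_eq_normHamming]
    exact (hconj i b hb hφb).trans hi
  exact ⟨U, n, higLift Ψ T hT hrel, by rwa [higLift_comp_higIota]⟩

end Higman

theorem hig_sofic_quotient_iff_almost_conjugating :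
    (∃ (Q : Type u) (_ : Group Q) (p : Hig G A B φ k →* Q),
        Function.Surjective p ∧ IsSofic Q ∧
        Function.Injective (p.comp (higIota G A B φ k))) ↔
    (∀ S : Set G, S.Finite → ∀ δ ε : ℝ, 0 < δ → 0 < ε →
        ∃ (n : ℕ) (ψ : G → Equiv.Perm (Fin n)) (f : Equiv.Perm (Fin n)),
          IsApprox S δ ψ ∧ f ^ k = 1 ∧
          ∀ b : B, (b : G) ∈ S → (φ b : G) ∈ S →
            permDist (ψ (b : G) * f) (f * ψ ((φ b : G))) < ε) := by
  constructor
  · rintro ⟨Q, _, p, -, hQ, hinj⟩ S hS δ ε hδ hε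
    refine exists_almostConjugating_approx_of_isSofic hQ hinj (τ := p (higStable G A B φ k))
      ?_ ?_ hS hδ hε
    · rw [← map_pow, higStable_pow, map_one]
    · intro b
      simp only [MonoidHom.comp_apply, ← map_mul, higIota_mul_higStable]
  · intro h
    obtain ⟨U, n, Φ, hΦ⟩ := exists_hom_permUltraproduct_of_almostConjugating h
    exact exists_isSofic_quotient_of_injective _ Φ hΦ
end

section
/- For a group G the following are equivalent: (1) there exist a set I, an ultrafilter 𝒰 on I, natural numbers (n_i)_{i∈I}, and an injective group homomorphism from G into the metric ultraproduct ∏_𝒰 Sym(n_i); (2) for every finite subset S ⊆ G and every δ > 0 there exist n ∈ ℕ and an (S,δ,n)-approximation of G. -/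
universe u

lemma permDist_eq_support {n : ℕ} (ρ σ : Equiv.Perm (Fin n)) :
    permDist ρ σ = ((σ⁻¹ * ρ).support.card : ℝ) / n := by
  have h : (Finset.univ.filter fun i => ρ i ≠ σ i) = (σ⁻¹ * ρ).support := by
    ext i
    simp [Equiv.Perm.mem_support, Equiv.Perm.mul_apply, Equiv.Perm.inv_eq_iff_eq, Equiv.symm_apply_eq]
  rw [permDist, h]

lemma permDist_one {n : ℕ} (σ : Equiv.Perm (Fin n)) :
    permDist σ 1 = ((σ.support.card : ℝ)) / n := by
  rw [permDist_eq_support]; simp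

lemma permDist_mul_one_le {n : ℕ} (σ τ : Equiv.Perm (Fin n)) :
    permDist (σ * τ) 1 ≤ permDist σ 1 + permDist τ 1 := by
  rw [permDist_one, permDist_one, permDist_one, ← add_div]
  refine div_le_div_of_nonneg_right ?_ (Nat.cast_nonneg n)
  have h1 : (σ * τ).support.card ≤ (σ.support ∪ τ.support).card :=
    Finset.card_le_card (Equiv.Perm.support_mul_le σ τ)
  have h2 : (σ.support ∪ τ.support).card ≤ σ.support.card + τ.support.card :=
    Finset.card_union_le _ _
  exact_mod_cast le_trans h1 h2

lemma permDist_inv_one {n : ℕ} (σ : Equiv.Perm (Fin n)) :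
    permDist σ⁻¹ 1 = permDist σ 1 := by
  rw [permDist_one, permDist_one, Equiv.Perm.support_inv]

lemma permDist_conj_one {n : ℕ} (σ g : Equiv.Perm (Fin n)) :
    permDist (g * σ * g⁻¹) 1 = permDist σ 1 := by
  rw [permDist_one, permDist_one, Equiv.Perm.support_conj, Finset.card_map]

/-- The normal subgroup of infinitesimals: sequences of permutations converging to the
identity in normalized Hamming distance along the ultrafilter. -/
noncomputable def infinitesimals {I : Type u} (U : Ultrafilter I) (n : I → ℕ) :
    Subgroup (∀ i, Equiv.Perm (Fin (n i))) where
  carrier := {x | ∀ δ : ℝ, 0 < δ → {i | permDist (x i) 1 < δ} ∈ U}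
  one_mem' := by
    intro δ hδ
    have : {i | permDist ((1 : ∀ i, Equiv.Perm (Fin (n i))) i) 1 < δ} = Set.univ := by
      ext i
      simp only [Set.mem_setOf_eq, Set.mem_univ, iff_true, Pi.one_apply, permDist_one,
        Equiv.Perm.support_one, Finset.card_empty]
      simpa using hδ
    rw [this]
    exact Filter.univ_mem
  mul_mem' := by
    intro x y hx hy δ hδ
    have hmem := Filter.inter_mem (hx (δ / 2) (by linarith)) (hy (δ / 2) (by linarith))
    refine Filter.mem_of_superset hmem ?_
    rintro i ⟨hxi, hyi⟩
    have := permDist_mul_one_le (x i) (y i)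
    simp only [Set.mem_setOf_eq, Pi.mul_apply] at *
    linarith
  inv_mem' := by
    intro x hx δ hδ
    refine Filter.mem_of_superset (hx δ hδ) ?_
    intro i hi
    simp only [Set.mem_setOf_eq, Pi.inv_apply] at *
    rwa [permDist_inv_one]

instance infinitesimals_normal {I : Type u} (U : Ultrafilter I) (n : I → ℕ) :
    (infinitesimals U n).Normal := by
  constructor
  intro x hx g δ hδ
  refine Filter.mem_of_superset (hx δ hδ) ?_
  intro i hi
  simp only [Set.mem_setOf_eq, Pi.mul_apply, Pi.inv_apply] at *
  rwa [permDist_conj_one]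

/-- The metric ultraproduct `∏_𝒰 Sym(n_i)` of finite symmetric groups: the quotient of the
direct product by the normal subgroup of infinitesimals. -/
noncomputable def MetricUltraproduct {I : Type u} (U : Ultrafilter I) (n : I → ℕ) : Type u :=
  (∀ i, Equiv.Perm (Fin (n i))) ⧸ infinitesimals U n

noncomputable instance {I : Type u} (U : Ultrafilter I) (n : I → ℕ) :
    Group (MetricUltraproduct U n) :=
  inferInstanceAs (Group ((∀ i, Equiv.Perm (Fin (n i))) ⧸ infinitesimals U n))

/-!
An injective homomorphism into `∏_𝒰 Sym(n_i)` lifts to maps `G → Sym(n_i)` that are multiplicative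
up to an infinitesimal error and keep every `g ≠ 1` at distance at least some `ε > 0` from the
identity for `𝒰`-most `i`; one such index already approximates any finite `S`, except that the
distance from the identity is only bounded below by `ε`. Letting `σ` act diagonally on `k`-tuples
repairs this: `1 - d(σ^⊗k, τ^⊗k) = (1 - d(σ, τ))^k`, so distances from the identity tend to `1`
while the multiplicativity defect grows at most `k`-fold. Conversely, `(F, 1/(j+1))`-approximations
indexed by `(F, j) ∈ Finset G × ℕ`, taken along an ultrafilter refining `atTop`, are the lifts of an
injective homomorphism.
-/

open Filter Finset Equiv Topology

section Hamming

variable {n : ℕ}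

lemma permDist_comm (ρ σ : Perm (Fin n)) : permDist ρ σ = permDist σ ρ := by
  simp only [permDist, ne_comm]

lemma permDist_self (σ : Perm (Fin n)) : permDist σ σ = 0 := by
  simp [permDist]

lemma permDist_le_one (ρ σ : Perm (Fin n)) : permDist ρ σ ≤ 1 := by
  refine div_le_one_of_le₀ ?_ n.cast_nonneg
  exact_mod_cast (card_filter_le _ _).trans_eq (card_fin n)

lemma permDist_inv_mul_one (σ τ : Perm (Fin n)) : permDist (σ⁻¹ * τ) 1 = permDist σ τ := by
  rw [permDist_comm σ τ, permDist_eq_support, permDist_eq_support, inv_one, one_mul]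

lemma permDist_eq_one_sub (hn : 0 < n) (ρ σ : Perm (Fin n)) :
    permDist ρ σ = 1 - (#{i | ρ i = σ i} : ℝ) / n := by
  have hsplit := card_filter_add_card_filter_not (s := univ) (fun i => ρ i = σ i)
  rw [card_univ, Fintype.card_fin] at hsplit
  have hn' : (n : ℝ) ≠ 0 := by positivity
  rw [permDist, eq_sub_iff_add_eq, ← add_div, div_eq_one_iff_eq hn', add_comm]
  exact_mod_cast hsplit

end Hamming

section TensorPower

variable {m : ℕ}

noncomputable def tensorPow (m k : ℕ) : Perm (Fin m) →* Perm (Fin (m ^ k)) :=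
  finFunctionFinEquiv.permCongrHom.toMonoidHom.comp
    (MulAction.toPermHom (Perm (Fin m)) (Fin k → Fin m))

lemma tensorPow_apply (k : ℕ) (σ : Perm (Fin m)) (x : Fin (m ^ k)) :
    tensorPow m k σ x = finFunctionFinEquiv (fun j => σ (finFunctionFinEquiv.symm x j)) :=
  rfl

lemma card_tensorPow_agree (k : ℕ) (σ τ : Perm (Fin m)) :
    #{x | tensorPow m k σ x = tensorPow m k τ x} = #{a | σ a = τ a} ^ k := by
  rw [← Fintype.card_piFinset_const, card_equiv finFunctionFinEquiv.symm]
  intro x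
  simp [tensorPow_apply, Fintype.mem_piFinset, funext_iff]

lemma permDist_tensorPow (k : ℕ) (σ τ : Perm (Fin m)) :
    permDist (tensorPow m k σ) (tensorPow m k τ) = 1 - (1 - permDist σ τ) ^ k := by
  rcases m.eq_zero_or_pos with rfl | hm
  · rw [Subsingleton.elim σ τ, permDist_self, permDist_self]
    simp
  rw [permDist_eq_one_sub (pow_pos hm k), permDist_eq_one_sub hm, card_tensorPow_agree,
    sub_sub_cancel, Nat.cast_pow, Nat.cast_pow, div_pow]

lemma permDist_tensorPow_le (k : ℕ) (σ τ : Perm (Fin m)) :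
    permDist (tensorPow m k σ) (tensorPow m k τ) ≤ k * permDist σ τ := by
  have hd := permDist_le_one σ τ
  have bernoulli := one_add_mul_le_pow (a := -permDist σ τ) (by linarith) k
  rw [← sub_eq_add_neg, mul_neg, ← sub_eq_add_neg] at bernoulli
  rw [permDist_tensorPow]
  linarith

end TensorPower

lemma isApprox_tensorPow {G : Type*} [Group G] {S : Set G} {m k : ℕ} {ψ : G → Perm (Fin m)}
    {δ δ' ε : ℝ} (hmul : ∀ g ∈ S, ∀ h ∈ S, g * h ∈ S → permDist (ψ g * ψ h) (ψ (g * h)) < δ')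
    (hsep : ∀ g ∈ S, g ≠ 1 → ε ≤ permDist (ψ g) 1) (hδ' : k * δ' < δ) (hε : (1 - ε) ^ k < δ) :
    IsApprox S δ (fun g => tensorPow m k (ψ g)) := by
  constructor
  · intro g hg h hh hgh
    calc permDist (tensorPow m k (ψ g) * tensorPow m k (ψ h)) (tensorPow m k (ψ (g * h)))
        ≤ k * permDist (ψ g * ψ h) (ψ (g * h)) := by
          rw [← map_mul]; exact permDist_tensorPow_le k _ _
      _ ≤ k * δ' := by gcongr; exact (hmul g hg h hh hgh).le
      _ < δ := hδ'
  · intro g hg hne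
    have hpow : (1 - permDist (ψ g) 1) ^ k ≤ (1 - ε) ^ k :=
      pow_le_pow_left₀ (by linarith [permDist_le_one (ψ g) 1]) (by linarith [hsep g hg hne]) k
    rw [← map_one (tensorPow m k), permDist_tensorPow]
    linarith

namespace MetricUltraproduct

variable {I : Type u} {U : Ultrafilter I} {n : I → ℕ}

noncomputable def mk (U : Ultrafilter I) (n : I → ℕ) :
    (∀ i, Perm (Fin (n i))) →* MetricUltraproduct U n :=
  QuotientGroup.mk' (infinitesimals U n)

lemma mk_surjective : Function.Surjective (mk U n) :=
  QuotientGroup.mk'_surjective _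

lemma mk_eq_mk_iff {x y : ∀ i, Perm (Fin (n i))} :
    mk U n x = mk U n y ↔ ∀ δ > 0, ∀ᶠ i in U, permDist (x i) (y i) < δ := by
  refine QuotientGroup.eq.trans (forall₂_congr fun δ _ => ?_)
  simp only [Pi.mul_apply, Pi.inv_apply, permDist_inv_mul_one]
  rfl

lemma mk_eq_one_iff {x : ∀ i, Perm (Fin (n i))} :
    mk U n x = 1 ↔ ∀ δ > 0, ∀ᶠ i in U, permDist (x i) 1 < δ := by
  rw [← map_one (mk U n), mk_eq_mk_iff]
  rfl

end MetricUltraproduct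

structure IsSoficApprox {G : Type*} [Group G] {I : Type u} (U : Ultrafilter I) (n : I → ℕ)
    (x : G → ∀ i, Perm (Fin (n i))) : Prop where
  eventually_mul : ∀ g h, ∀ δ > 0, ∀ᶠ i in U, permDist (x g i * x h i) (x (g * h) i) < δ
  separated : ∀ g ≠ 1, ∃ ε > 0, ∀ᶠ i in U, ε ≤ permDist (x g i) 1

namespace IsSoficApprox

variable {G : Type*} [Group G] {I : Type u} {U : Ultrafilter I} {n : I → ℕ}
  {x : G → ∀ i, Perm (Fin (n i))}

lemma of_injective (f : G →* MetricUltraproduct U n) (hf : Function.Injective f)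
    (hx : ∀ g, MetricUltraproduct.mk U n (x g) = f g) : IsSoficApprox U n x := by
  refine ⟨fun g h => (MetricUltraproduct.mk_eq_mk_iff (x := x g * x h)).mp ?_, fun g hg => ?_⟩
  · rw [map_mul, hx, hx, hx, map_mul]
  · have hne : ¬ MetricUltraproduct.mk U n (x g) = 1 := by
      rwa [hx, map_eq_one_iff f hf]
    simp only [MetricUltraproduct.mk_eq_one_iff, not_forall, exists_prop] at hne
    obtain ⟨ε, hε, hnot⟩ := hne
    exact ⟨ε, hε, (Ultrafilter.eventually_not.mpr hnot).mono fun i hi => not_lt.mp hi⟩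

noncomputable def toMonoidHom (hx : IsSoficApprox U n x) : G →* MetricUltraproduct U n :=
  MonoidHom.mk' (fun g => MetricUltraproduct.mk U n (x g)) fun g h => by
    rw [← map_mul, eq_comm, MetricUltraproduct.mk_eq_mk_iff]
    exact hx.eventually_mul g h

lemma toMonoidHom_apply (hx : IsSoficApprox U n x) (g : G) :
    hx.toMonoidHom g = MetricUltraproduct.mk U n (x g) :=
  rfl

lemma injective_toMonoidHom (hx : IsSoficApprox U n x) : Function.Injective hx.toMonoidHom := by
  refine (injective_iff_map_eq_one _).mpr fun g hg => ?_
  by_contra hne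
  obtain ⟨ε, hε, hsep⟩ := hx.separated g hne
  rw [toMonoidHom_apply, MetricUltraproduct.mk_eq_one_iff] at hg
  obtain ⟨i, hge, hlt⟩ := (hsep.and (hg ε hε)).exists
  exact hge.not_gt hlt

lemma eventually_forall_mul (hx : IsSoficApprox U n x) {S : Set G} (hS : S.Finite) {δ : ℝ}
    (hδ : 0 < δ) :
    ∀ᶠ i in U, ∀ g ∈ S, ∀ h ∈ S, permDist (x g i * x h i) (x (g * h) i) < δ :=
  (eventually_all_finite hS).mpr fun g _ =>
    (eventually_all_finite hS).mpr fun h _ => hx.eventually_mul g h δ hδ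

lemma exists_uniform_separated (hx : IsSoficApprox U n x) {S : Set G} (hS : S.Finite) :
    ∃ ε ∈ Set.Ioo (0 : ℝ) 1, ∀ᶠ i in U, ∀ g ∈ S, g ≠ 1 → ε ≤ permDist (x g i) 1 := by
  have hS' : {g ∈ S | g ≠ 1}.Finite := hS.subset fun g hg => hg.1
  have hsmall : ∀ g ∈ {g ∈ S | g ≠ 1},
      ∀ᶠ ε in 𝓝[>] (0 : ℝ), ∀ᶠ i in U, ε ≤ permDist (x g i) 1 := by
    intro g hg
    obtain ⟨ε₀, hε₀, hsep⟩ := hx.separated g hg.2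
    filter_upwards [Ioc_mem_nhdsGT hε₀] with ε hε
    exact hsep.mono fun i hi => hε.2.trans hi
  have hIoo : ∀ᶠ ε in 𝓝[>] (0 : ℝ), ε ∈ Set.Ioo 0 1 := Ioo_mem_nhdsGT zero_lt_one
  obtain ⟨ε, hε, hsep⟩ := (hIoo.and ((eventually_all_finite hS').mpr hsmall)).exists
  exact ⟨ε, hε, ((eventually_all_finite hS').mpr hsep).mono fun i hi g hg hne => hi g ⟨hg, hne⟩⟩

lemma exists_isApprox (hx : IsSoficApprox U n x) {S : Set G} (hS : S.Finite) {δ : ℝ}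
    (hδ : 0 < δ) : ∃ (m : ℕ) (ψ : G → Perm (Fin m)), IsApprox S δ ψ := by
  obtain ⟨ε, ⟨hε, -⟩, hsep⟩ := hx.exists_uniform_separated hS
  obtain ⟨k, hk⟩ := exists_pow_lt_of_lt_one hδ (by linarith : 1 - ε < 1)
  have hkδ : k * (δ / (k + 1)) < δ := by
    rw [mul_div_assoc', div_lt_iff₀ (by positivity)]
    nlinarith
  have hmul := hx.eventually_forall_mul hS (δ := δ / (k + 1)) (by positivity)
  obtain ⟨i, hmul, hsep⟩ := (hmul.and hsep).exists
  exact ⟨_, _, isApprox_tensorPow (fun g hg h hh _ => hmul g hg h hh) hsep hkδ hk⟩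

end IsSoficApprox

lemma eventually_subset_and_one_div_lt {G : Type*} (F : Finset G) {δ : ℝ} (hδ : 0 < δ) :
    ∀ᶠ p : Finset G × ℕ in atTop, F ⊆ p.1 ∧ 1 / ((p.2 : ℝ) + 1) < δ := by
  rw [← prod_atTop_atTop_eq]
  exact (eventually_ge_atTop F).prod_mk
    (tendsto_one_div_add_atTop_nhds_zero_nat.eventually (gt_mem_nhds hδ))

lemma exists_isSoficApprox {G : Type u} [Group G]
    (H : ∀ S : Set G, S.Finite → ∀ δ : ℝ, 0 < δ →
      ∃ (n : ℕ) (ψ : G → Perm (Fin n)), IsApprox S δ ψ) :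
    ∃ (I : Type u) (U : Ultrafilter I) (n : I → ℕ) (x : G → ∀ i, Perm (Fin (n i))),
      IsSoficApprox U n x := by
  classical
  choose n ψ hψ using fun p : Finset G × ℕ =>
    H p.1 p.1.finite_toSet (1 / (p.2 + 1)) (by positivity)
  have hU {P : Finset G × ℕ → Prop} (h : ∀ᶠ p in atTop, P p) :
      ∀ᶠ p in Ultrafilter.of (atTop : Filter (Finset G × ℕ)), P p :=
    Ultrafilter.of_le _ h
  refine ⟨_, Ultrafilter.of atTop, n, fun g p => ψ p g, fun g h δ hδ => ?_,
    fun g hg => ⟨1 / 2, by norm_num, ?_⟩⟩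
  · filter_upwards [hU (eventually_subset_and_one_div_lt {g, h, g * h} hδ)] with p ⟨hsub, hp⟩
    exact ((hψ p).1 g (hsub (by simp)) h (hsub (by simp)) (hsub (by simp))).trans hp
  · filter_upwards [hU (eventually_subset_and_one_div_lt {g} (by norm_num : (0 : ℝ) < 1 / 2))]
      with p ⟨hsub, hp⟩
    linarith [(hψ p).2 g (hsub (by simp)) hg]

/-- **Proposition.** A group embeds in a metric ultraproduct of finite symmetric groups iff
every finite subset admits `(S,δ,n)`-approximations for every `δ > 0` (i.e., it is sofic). -/
theorem embeds_in_metric_ultraproduct_iff_approximations (G : Type u) [Group G] :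
    (∃ (I : Type u) (U : Ultrafilter I) (n : I → ℕ)
        (f : G →* MetricUltraproduct U n), Function.Injective f) ↔
    (∀ S : Set G, S.Finite → ∀ δ : ℝ, 0 < δ →
        ∃ (n : ℕ) (ψ : G → Equiv.Perm (Fin n)), IsApprox S δ ψ) := by
  constructor
  · rintro ⟨I, U, n, f, hf⟩ S hS δ hδ
    have hx := IsSoficApprox.of_injective f hf
      fun g => Function.surjInv_eq MetricUltraproduct.mk_surjective (f g)
    exact hx.exists_isApprox hS hδ
  · intro H
    obtain ⟨I, U, n, x, hx⟩ := exists_isSoficApprox H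
    exact ⟨I, U, n, hx.toMonoidHom, hx.injective_toMonoidHom⟩
end

section
/- Suppose G₁ and G₂ are groups with internal semidirect product decompositions G₁ = H₁ ⋉ N₁ and G₂ = H₂ ⋉ N₂ (i.e. N_i is a normal subgroup of G_i, H_i is a subgroup of G_i, H_i ∩ N_i = {1}, and H_i·N_i = G_i), and let φ: H₁ → H₂ be a group isomorphism. Then in the amalgamated free product G₁ *_φ G₂ there is a split short exact sequence 1 → N₁ * N₂ → G₁ *_φ G₂ → H₁ → 1, where the map N₁ * N₂ → G₁ *_φ G₂ is the (injective) homomorphism induced by the natural inclusions of N₁ and N₂, its image is normal, and the splitting H₁ → G₁ *_φ G₂ is the natural inclusion; consequently G₁ *_φ G₂ ≅ H₁ ⋉ (N₁ * N₂), with H₁ acting on N₁ by conjugation in G₁ and on N₂ by conjugation in G₂ via the isomorphism φ. -/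
/-!
Write `Gᵢ = Nᵢ ⋊ Hᵢ`. The maps `G₁ → (N₁ ∗ N₂) ⋊ H₁`, `n h ↦ (n, h)`, and
`G₂ → (N₁ ∗ N₂) ⋊ H₁`, `n h ↦ (n, φ⁻¹ h)`, agree on the amalgamated subgroup, so they induce
`Ψ : G₁ ∗_φ G₂ → (N₁ ∗ N₂) ⋊ H₁`. Conversely, the inclusions of `N₁ ∗ N₂` and of `H₁` into the
amalgam satisfy the conjugation relation of the semidirect product, which gives `Φ` in the other
direction, and `Φ ∘ Ψ = id` because both sides agree on every `Nᵢ` and `Hᵢ`. Hence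
`J : N₁ ∗ N₂ → G₁ ∗_φ G₂` is injective (as `Ψ ∘ J` is the inclusion of `N₁ ∗ N₂`), and the kernel
of the `H₁`-component of `Ψ` is the image of `J`.
-/

universe u v

section Amalgam

variable {G₁ : Type u} {G₂ : Type v} [Group G₁] [Group G₂]

/-- The relators identifying `H₁ ≤ G₁` with `H₂ ≤ G₂` via `φ` inside the free product. -/
def amalRels (H₁ : Subgroup G₁) (H₂ : Subgroup G₂) (φ : H₁ ≃* H₂) :
    Set (Monoid.Coprod G₁ G₂) :=
  ⋃ h : H₁, {Monoid.Coprod.inl (h : G₁) *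
    (Monoid.Coprod.inr ((φ h : G₂)) : Monoid.Coprod G₁ G₂)⁻¹}

/-- The amalgamated free product `G₁ ∗_φ G₂`: the quotient of the free product `G₁ ∗ G₂` by
the normal closure of `{h · φ(h)⁻¹ : h ∈ H₁}`. -/
def Amal (H₁ : Subgroup G₁) (H₂ : Subgroup G₂) (φ : H₁ ≃* H₂) : Type (max u v) :=
  Monoid.Coprod G₁ G₂ ⧸ Subgroup.normalClosure (amalRels H₁ H₂ φ)

instance (H₁ : Subgroup G₁) (H₂ : Subgroup G₂) (φ : H₁ ≃* H₂) : Group (Amal H₁ H₂ φ) :=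
  inferInstanceAs (Group (Monoid.Coprod G₁ G₂ ⧸ Subgroup.normalClosure (amalRels H₁ H₂ φ)))

/-- The quotient map `G₁ ∗ G₂ → G₁ ∗_φ G₂`. -/
def amalMk (H₁ : Subgroup G₁) (H₂ : Subgroup G₂) (φ : H₁ ≃* H₂) :
    Monoid.Coprod G₁ G₂ →* Amal H₁ H₂ φ :=
  QuotientGroup.mk' (Subgroup.normalClosure (amalRels H₁ H₂ φ))

/-- The homomorphism `N₁ ∗ N₂ → G₁ ∗_φ G₂` induced by the natural inclusions. -/
def amalJ (H₁ : Subgroup G₁) (H₂ : Subgroup G₂) (N₁ : Subgroup G₁) (N₂ : Subgroup G₂)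
    (φ : H₁ ≃* H₂) : Monoid.Coprod N₁ N₂ →* Amal H₁ H₂ φ :=
  Monoid.Coprod.lift ((amalMk H₁ H₂ φ).comp (Monoid.Coprod.inl.comp N₁.subtype))
    ((amalMk H₁ H₂ φ).comp (Monoid.Coprod.inr.comp N₂.subtype))

/-- The natural inclusion `H₁ → G₁ ∗_φ G₂` (through the first factor). -/
def amalS (H₁ : Subgroup G₁) (H₂ : Subgroup G₂) (φ : H₁ ≃* H₂) : H₁ →* Amal H₁ H₂ φ :=
  (amalMk H₁ H₂ φ).comp (Monoid.Coprod.inl.comp H₁.subtype)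

end Amalgam

open Monoid

def MulAut.coprodCongrHom {K M₁ M₂ : Type*} [Monoid K] [Monoid M₁] [Monoid M₂]
    (a₁ : K →* MulAut M₁) (a₂ : K →* MulAut M₂) : K →* MulAut (Coprod M₁ M₂) where
  toFun k := MulEquiv.coprodCongr (a₁ k) (a₂ k)
  map_one' := MulEquiv.toMonoidHom_injective <| Coprod.hom_ext (by ext; simp) (by ext; simp)
  map_mul' k k' := MulEquiv.toMonoidHom_injective <| Coprod.hom_ext (by ext; simp) (by ext; simp)

namespace Subgroup

variable {G : Type*} [Group G] {H N : Subgroup G}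

theorem isComplement'_of_inf_eq_bot_of_sup_eq_top [N.Normal] (hd : H ⊓ N = ⊥) (ht : H ⊔ N = ⊤) :
    N.IsComplement' H :=
  isComplement'_of_disjoint_and_mul_eq_univ (disjoint_iff.2 (inf_comm H N ▸ hd))
    (by rw [← normal_mul, sup_comm, ht, coe_top])

theorem _root_.MonoidHom.eq_of_eqOn_of_sup_eq_top {M : Type*} [Monoid M] {f g : G →* M}
    (ht : H ⊔ N = ⊤) (hH : Set.EqOn f g H) (hN : Set.EqOn f g N) : f = g :=
  MonoidHom.eq_of_eqOn_top fun _ hx =>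
    (sup_le (show H ≤ f.eqLocus g from hH) (show N ≤ f.eqLocus g from hN)) (ht ▸ hx)

namespace IsComplement'

variable [N.Normal] {M K : Type*} [Group M] [Group K] {ψ : K →* MulAut M}

noncomputable def semidirectProductMap (hc : N.IsComplement' H) (fn : N →* M) (fh : H →* K)
    (hf : ∀ (h : H) (n : N), fn (MulAut.conjNormal (h : G) n) = ψ (fh h) (fn n)) :
    G →* M ⋊[ψ] K :=
  (SemidirectProduct.map fn fh fun h => MonoidHom.ext fun n => by exact hf h n).comp
    (SemidirectProduct.mulEquivSubgroup hc).symm.toMonoidHom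

variable (hc : N.IsComplement' H) (fn : N →* M) (fh : H →* K)
  (hf : ∀ (h : H) (n : N), fn (MulAut.conjNormal (h : G) n) = ψ (fh h) (fn n))

theorem semidirectProductMap_of_mem_left {n : G} (hn : n ∈ N) :
    hc.semidirectProductMap fn fh hf n = SemidirectProduct.inl (fn ⟨n, hn⟩) := by
  have : (SemidirectProduct.mulEquivSubgroup hc).symm n = SemidirectProduct.inl ⟨n, hn⟩ :=
    (MulEquiv.symm_apply_eq _).2 (by simp)
  simp [semidirectProductMap, this]

theorem semidirectProductMap_of_mem_right {h : G} (hh : h ∈ H) :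
    hc.semidirectProductMap fn fh hf h = SemidirectProduct.inr (fh ⟨h, hh⟩) := by
  have : (SemidirectProduct.mulEquivSubgroup hc).symm h = SemidirectProduct.inr ⟨h, hh⟩ :=
    (MulEquiv.symm_apply_eq _).2 (by simp)
  simp [semidirectProductMap, this]

end IsComplement'

end Subgroup

section AmalgamOfSemidirect

variable {G₁ : Type u} {G₂ : Type v} [Group G₁] [Group G₂]
  (H₁ : Subgroup G₁) (H₂ : Subgroup G₂) (N₁ : Subgroup G₁) (N₂ : Subgroup G₂) (φ : H₁ ≃* H₂)

def amalAct [N₁.Normal] [N₂.Normal] : H₁ →* MulAut (Coprod N₁ N₂) :=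
  MulAut.coprodCongrHom (MulAut.conjNormal.comp H₁.subtype)
    (MulAut.conjNormal.comp (H₂.subtype.comp φ.toMonoidHom))

theorem amalAct_apply_inl [N₁.Normal] [N₂.Normal] (h : H₁) (x : N₁) :
    amalAct H₁ H₂ N₁ N₂ φ h (Coprod.inl x) = Coprod.inl (MulAut.conjNormal (h : G₁) x) :=
  rfl

theorem amalAct_apply_inr [N₁.Normal] [N₂.Normal] (h : H₁) (x : N₂) :
    amalAct H₁ H₂ N₁ N₂ φ h (Coprod.inr x) = Coprod.inr (MulAut.conjNormal (φ h : G₂) x) :=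
  rfl

theorem amalS_eq_amalMk_inr (h : H₁) :
    amalS H₁ H₂ φ h = amalMk H₁ H₂ φ (Coprod.inr (φ h : G₂)) := by
  have hrel : Coprod.inl (h : G₁) * (Coprod.inr (φ h : G₂))⁻¹ ∈
      Subgroup.normalClosure (amalRels H₁ H₂ φ) :=
    Subgroup.subset_normalClosure (Set.mem_iUnion.2 ⟨h, rfl⟩)
  change amalMk H₁ H₂ φ (Coprod.inl (h : G₁)) = _
  rw [← mul_inv_eq_one, ← map_inv, ← map_mul]
  exact (QuotientGroup.eq_one_iff _).2 hrel

theorem amalS_conj_amalJ_inl [N₁.Normal] (h : H₁) (x : N₁) :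
    amalS H₁ H₂ φ h * amalJ H₁ H₂ N₁ N₂ φ (Coprod.inl x) * (amalS H₁ H₂ φ h)⁻¹ =
      amalJ H₁ H₂ N₁ N₂ φ (Coprod.inl (MulAut.conjNormal (h : G₁) x)) := by
  simp [amalS, amalJ, ← map_inv, ← map_mul]

theorem amalS_conj_amalJ_inr [N₂.Normal] (h : H₁) (x : N₂) :
    amalS H₁ H₂ φ h * amalJ H₁ H₂ N₁ N₂ φ (Coprod.inr x) * (amalS H₁ H₂ φ h)⁻¹ =
      amalJ H₁ H₂ N₁ N₂ φ (Coprod.inr (MulAut.conjNormal (φ h : G₂) x)) := by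
  rw [amalS_eq_amalMk_inr]
  simp [amalJ, ← map_inv, ← map_mul]

theorem amalJ_comp_amalAct [N₁.Normal] [N₂.Normal] (h : H₁) :
    (amalJ H₁ H₂ N₁ N₂ φ).comp (amalAct H₁ H₂ N₁ N₂ φ h).toMonoidHom =
      (MulAut.conj (amalS H₁ H₂ φ h)).toMonoidHom.comp (amalJ H₁ H₂ N₁ N₂ φ) :=
  Coprod.hom_ext (MonoidHom.ext fun x => (amalS_conj_amalJ_inl H₁ H₂ N₁ N₂ φ h x).symm)
    (MonoidHom.ext fun x => (amalS_conj_amalJ_inr H₁ H₂ N₁ N₂ φ h x).symm)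

end AmalgamOfSemidirect

section AmalgamIsoSemidirect

variable {G₁ : Type u} {G₂ : Type v} [Group G₁] [Group G₂]
  {H₁ : Subgroup G₁} {H₂ : Subgroup G₂} {N₁ : Subgroup G₁} {N₂ : Subgroup G₂}
  [N₁.Normal] [N₂.Normal] (hc₁ : N₁.IsComplement' H₁) (hc₂ : N₂.IsComplement' H₂)
  (φ : H₁ ≃* H₂)

variable (N₂) in
noncomputable def amalToSemidirectLeft : G₁ →* Coprod N₁ N₂ ⋊[amalAct H₁ H₂ N₁ N₂ φ] H₁ :=
  hc₁.semidirectProductMap Coprod.inl (MonoidHom.id H₁) fun h n =>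
    (amalAct_apply_inl H₁ H₂ N₁ N₂ φ h n).symm

variable (N₁) in
noncomputable def amalToSemidirectRight : G₂ →* Coprod N₁ N₂ ⋊[amalAct H₁ H₂ N₁ N₂ φ] H₁ :=
  hc₂.semidirectProductMap Coprod.inr φ.symm.toMonoidHom fun h n => by
    rw [MulEquiv.coe_toMonoidHom, amalAct_apply_inr, MulEquiv.apply_symm_apply]

theorem amalToSemidirectLeft_coe_normal (n : N₁) :
    amalToSemidirectLeft N₂ hc₁ φ n = SemidirectProduct.inl (Coprod.inl n) :=
  Subgroup.IsComplement'.semidirectProductMap_of_mem_left _ _ _ _ n.2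

theorem amalToSemidirectLeft_coe_complement (h : H₁) :
    amalToSemidirectLeft N₂ hc₁ φ h = SemidirectProduct.inr h :=
  Subgroup.IsComplement'.semidirectProductMap_of_mem_right _ _ _ _ h.2

theorem amalToSemidirectRight_coe_normal (n : N₂) :
    amalToSemidirectRight N₁ hc₂ φ n = SemidirectProduct.inl (Coprod.inr n) :=
  Subgroup.IsComplement'.semidirectProductMap_of_mem_left _ _ _ _ n.2

theorem amalToSemidirectRight_coe_complement (h : H₂) :
    amalToSemidirectRight N₁ hc₂ φ h = SemidirectProduct.inr (φ.symm h) :=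
  Subgroup.IsComplement'.semidirectProductMap_of_mem_right _ _ _ _ h.2

noncomputable def amalToSemidirect : Amal H₁ H₂ φ →* Coprod N₁ N₂ ⋊[amalAct H₁ H₂ N₁ N₂ φ] H₁ :=
  QuotientGroup.lift _
    (Coprod.lift (amalToSemidirectLeft N₂ hc₁ φ) (amalToSemidirectRight N₁ hc₂ φ)) <|
    Subgroup.normalClosure_le_normal <| Set.iUnion_subset fun h => by
      simp [amalToSemidirectLeft_coe_complement, amalToSemidirectRight_coe_complement]

theorem amalToSemidirect_comp_amalJ :
    (amalToSemidirect hc₁ hc₂ φ).comp (amalJ H₁ H₂ N₁ N₂ φ) = SemidirectProduct.inl :=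
  Coprod.hom_ext (MonoidHom.ext (amalToSemidirectLeft_coe_normal hc₁ φ))
    (MonoidHom.ext (amalToSemidirectRight_coe_normal hc₂ φ))

theorem amalToSemidirect_comp_amalS :
    (amalToSemidirect hc₁ hc₂ φ).comp (amalS H₁ H₂ φ) = SemidirectProduct.inr :=
  MonoidHom.ext (amalToSemidirectLeft_coe_complement hc₁ φ)

noncomputable def amalOfSemidirect : Coprod N₁ N₂ ⋊[amalAct H₁ H₂ N₁ N₂ φ] H₁ →* Amal H₁ H₂ φ :=
  SemidirectProduct.lift (amalJ H₁ H₂ N₁ N₂ φ) (amalS H₁ H₂ φ) (amalJ_comp_amalAct H₁ H₂ N₁ N₂ φ)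

theorem amalOfSemidirect_comp_amalToSemidirect :
    (amalOfSemidirect φ).comp (amalToSemidirect hc₁ hc₂ φ) = MonoidHom.id (Amal H₁ H₂ φ) := by
  refine QuotientGroup.monoidHom_ext _ (Coprod.hom_ext ?_ ?_)
  · refine MonoidHom.eq_of_eqOn_of_sup_eq_top hc₁.sup_eq_top (fun n hn => ?_) (fun h hh => ?_)
    · lift n to N₁ using hn
      show amalOfSemidirect φ (amalToSemidirectLeft N₂ hc₁ φ n) = _
      rw [amalToSemidirectLeft_coe_normal]
      exact SemidirectProduct.lift_inl _ _ _ _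
    · lift h to H₁ using hh
      show amalOfSemidirect φ (amalToSemidirectLeft N₂ hc₁ φ h) = _
      rw [amalToSemidirectLeft_coe_complement]
      exact SemidirectProduct.lift_inr _ _ _ _
  · refine MonoidHom.eq_of_eqOn_of_sup_eq_top hc₂.sup_eq_top (fun n hn => ?_) (fun h hh => ?_)
    · lift n to N₂ using hn
      show amalOfSemidirect φ (amalToSemidirectRight N₁ hc₂ φ n) = _
      rw [amalToSemidirectRight_coe_normal]
      exact SemidirectProduct.lift_inl _ _ _ _
    · lift h to H₂ using hh
      show amalOfSemidirect φ (amalToSemidirectRight N₁ hc₂ φ h) = _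
      rw [amalToSemidirectRight_coe_complement, amalOfSemidirect, SemidirectProduct.lift_inr,
        amalS_eq_amalMk_inr, MulEquiv.apply_symm_apply]
      rfl

theorem ker_rightHom_comp_amalToSemidirect :
    (SemidirectProduct.rightHom.comp (amalToSemidirect hc₁ hc₂ φ)).ker =
      (amalJ H₁ H₂ N₁ N₂ φ).range := by
  ext y
  constructor
  · intro hy
    obtain ⟨x, hx⟩ : amalToSemidirect hc₁ hc₂ φ y ∈ (SemidirectProduct.inl).range := by
      rwa [SemidirectProduct.range_inl_eq_ker_rightHom]
    refine ⟨x, ?_⟩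
    calc amalJ H₁ H₂ N₁ N₂ φ x = amalOfSemidirect φ (SemidirectProduct.inl x) :=
          (SemidirectProduct.lift_inl _ _ _ x).symm
      _ = amalOfSemidirect φ (amalToSemidirect hc₁ hc₂ φ y) := by rw [hx]
      _ = y := DFunLike.congr_fun (amalOfSemidirect_comp_amalToSemidirect hc₁ hc₂ φ) y
  · rintro ⟨x, rfl⟩
    rw [MonoidHom.mem_ker, MonoidHom.comp_apply, ← MonoidHom.comp_apply _ (amalJ _ _ _ _ _),
      amalToSemidirect_comp_amalJ, SemidirectProduct.rightHom_inl]

end AmalgamIsoSemidirect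

/-- **Lemma.** If `G₁ = H₁ ⋉ N₁` and `G₂ = H₂ ⋉ N₂` are internal semidirect products and
`φ : H₁ ≅ H₂`, then there is a split short exact sequence
`1 → N₁ ∗ N₂ → G₁ ∗_φ G₂ → H₁ → 1`, the splitting being the natural inclusion of `H₁`, and
`H₁` acts on `N₁` by conjugation in `G₁` and on `N₂` by conjugation in `G₂` via `φ`; hence
`G₁ ∗_φ G₂ ≅ H₁ ⋉ (N₁ ∗ N₂)`. -/
theorem amalgam_of_semidirect_is_semidirect {G₁ : Type u} {G₂ : Type v}
    [Group G₁] [Group G₂] (H₁ : Subgroup G₁) (H₂ : Subgroup G₂)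
    (N₁ : Subgroup G₁) (N₂ : Subgroup G₂) (hN₁ : N₁.Normal) (hN₂ : N₂.Normal)
    (hd₁ : H₁ ⊓ N₁ = ⊥) (hd₂ : H₂ ⊓ N₂ = ⊥)
    (ht₁ : H₁ ⊔ N₁ = ⊤) (ht₂ : H₂ ⊔ N₂ = ⊤)
    (φ : H₁ ≃* H₂) :
    Function.Injective (amalJ H₁ H₂ N₁ N₂ φ) ∧
    ((amalJ H₁ H₂ N₁ N₂ φ).range).Normal ∧
    ∃ ρ : Amal H₁ H₂ φ →* H₁,
      Function.Surjective ρ ∧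
      ρ.ker = (amalJ H₁ H₂ N₁ N₂ φ).range ∧
      ρ.comp (amalS H₁ H₂ φ) = MonoidHom.id H₁ ∧
      (∀ (h : H₁) (x : N₁),
        amalS H₁ H₂ φ h * amalJ H₁ H₂ N₁ N₂ φ (Monoid.Coprod.inl x) * (amalS H₁ H₂ φ h)⁻¹ =
          amalJ H₁ H₂ N₁ N₂ φ
            (Monoid.Coprod.inl ⟨(h : G₁) * (x : G₁) * (h : G₁)⁻¹, hN₁.conj_mem x x.2 h⟩)) ∧
      (∀ (h : H₁) (x : N₂),
        amalS H₁ H₂ φ h * amalJ H₁ H₂ N₁ N₂ φ (Monoid.Coprod.inr x) * (amalS H₁ H₂ φ h)⁻¹ =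
          amalJ H₁ H₂ N₁ N₂ φ
            (Monoid.Coprod.inr
              ⟨(φ h : G₂) * (x : G₂) * (φ h : G₂)⁻¹, hN₂.conj_mem x x.2 (φ h)⟩)) := by
  have hc₁ := Subgroup.isComplement'_of_inf_eq_bot_of_sup_eq_top hd₁ ht₁
  have hc₂ := Subgroup.isComplement'_of_inf_eq_bot_of_sup_eq_top hd₂ ht₂
  have hker := ker_rightHom_comp_amalToSemidirect hc₁ hc₂ φ
  have hsplit : (SemidirectProduct.rightHom.comp (amalToSemidirect hc₁ hc₂ φ)).comp
      (amalS H₁ H₂ φ) = MonoidHom.id H₁ := by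
    rw [MonoidHom.comp_assoc, amalToSemidirect_comp_amalS, SemidirectProduct.rightHom_comp_inr]
  have hinj : Function.Injective (amalToSemidirect hc₁ hc₂ φ ∘ amalJ H₁ H₂ N₁ N₂ φ) := by
    rw [← MonoidHom.coe_comp, amalToSemidirect_comp_amalJ]
    exact SemidirectProduct.inl_injective
  exact ⟨hinj.of_comp, hker ▸ MonoidHom.normal_ker _, _,
    fun h => ⟨amalS H₁ H₂ φ h, DFunLike.congr_fun hsplit h⟩, hker, hsplit,
    amalS_conj_amalJ_inl H₁ H₂ N₁ N₂ φ, amalS_conj_amalJ_inr H₁ H₂ N₁ N₂ φ⟩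
end

section
/- Let G be a group, let A, B ≤ G be subgroups, let φ: B → A be a group isomorphism, and suppose there exists a group homomorphism π: G → A × B with π(a) = (a,1) for all a ∈ A and π(b) = (1,b) for all b ∈ B. Then for every integer k ≥ 3 there exists a group homomorphism μ̄: bar-Hig_k(G,φ) → G^k such that for each l ∈ {1,…,k} the composition μ̄ ∘ ι_l : G → G^k with the natural map ι_l of the l-th copy of G into bar-Hig_k(G,φ) is injective; moreover there exists a group homomorphism μ: Hig_k(G,φ) → C_k ⋉ G^k, where the cyclic group C_k of order k acts on G^k by cyclically permuting the coordinates, whose composition with the natural map ι: G → Hig_k(G,φ) is injective. -/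
/-!
Send `g ∈ G` to the tuple in `G^k` with `g` at position `l`, `φ(π₂ g)` at `l + 1`,
`φ⁻¹(π₁ g)` at `l - 1` and `1` elsewhere; for `k ≥ 3` these three positions are distinct.
Then `b ∈ B` placed at `l` and `φ b ∈ A` placed at `l + 1` give the same tuple (`b` at `l`,
`φ b` at `l + 1`), so these embeddings respect the relations of `bar-Hig_k(G,φ)`. The same
identity says that the cyclic shift of the tuples conjugates `B` onto `A` as `t` does, so
sending `t` to the generator of `C_k` defines `μ`.
-/

universe u

variable (G : Type u) [Group G] (A B : Subgroup G) (φ : B ≃* A) (k : ℕ)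

/-- Defining relators of `bar-Hig_k(G, φ)`: `b_i φ_i(b_i)⁻¹` with the copies of `G`
indexed by `ℤ/kℤ`. -/
def barHigRels : Set (Monoid.CoprodI (fun _ : ZMod k => G)) :=
  ⋃ (i : ZMod k) (b : B),
    {Monoid.CoprodI.of (M := fun _ : ZMod k => G) (i := i) ((b : G)) *
      (Monoid.CoprodI.of (M := fun _ : ZMod k => G) (i := i + 1) ((φ b : G)))⁻¹}

/-- `bar-Hig_k(G, φ)`: the cyclic amalgam of `k` copies of `G`. -/
def BarHig : Type u :=
  Monoid.CoprodI (fun _ : ZMod k => G) ⧸ Subgroup.normalClosure (barHigRels G A B φ k)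

instance : Group (BarHig G A B φ k) :=
  inferInstanceAs (Group (Monoid.CoprodI (fun _ : ZMod k => G) ⧸
    Subgroup.normalClosure (barHigRels G A B φ k)))

/-- The natural map `ι_l : G → bar-Hig_k(G, φ)` of the `l`-th copy. -/
def barHigIota (l : ZMod k) : G →* BarHig G A B φ k :=
  (QuotientGroup.mk' (Subgroup.normalClosure (barHigRels G A B φ k))).comp
    (Monoid.CoprodI.of (M := fun _ : ZMod k => G) (i := l))

/-- The action of the cyclic group `C_k = ℤ/kℤ` on `G^k` cyclically permuting coordinates. -/
def cycAut : Multiplicative (ZMod k) →* MulAut (ZMod k → G) where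
  toFun c :=
    { toFun := fun g i => g (i - c.toAdd)
      invFun := fun g i => g (i + c.toAdd)
      left_inv := fun g => funext fun i => by simp
      right_inv := fun g => funext fun i => by simp
      map_mul' := fun g h => rfl }
  map_one' := by
    ext g i
    simp
  map_mul' := fun c d => by
    ext g i
    simp [sub_sub]

section UniversalProperty

variable {G A B φ k} {H : Type*} [Group H]

def BarHig.lift (ρ : ZMod k → G →* H)
    (hρ : ∀ (l : ZMod k) (b : B), ρ l b = ρ (l + 1) (φ b)) : BarHig G A B φ k →* H :=
  QuotientGroup.lift _ (Monoid.CoprodI.lift ρ) <| Subgroup.normalClosure_le_normal <| by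
    simp only [barHigRels, Set.iUnion_subset_iff, Set.singleton_subset_iff, SetLike.mem_coe,
      MonoidHom.mem_ker, map_mul, map_inv, Monoid.CoprodI.lift_of]
    exact fun l b => mul_inv_eq_one.2 (hρ l b)

theorem BarHig.lift_comp_barHigIota (ρ : ZMod k → G →* H)
    (hρ : ∀ (l : ZMod k) (b : B), ρ l b = ρ (l + 1) (φ b)) (l : ZMod k) :
    (BarHig.lift ρ hρ).comp (barHigIota G A B φ k l) = ρ l :=
  MonoidHom.ext fun _ => Monoid.CoprodI.lift_of ρ _

def Hig.lift (f : G →* H) (t : H) (ht : t ^ k = 1) (hf : ∀ b : B, t⁻¹ * f b * t = f (φ b)) :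
    Hig G A B φ k →* H :=
  QuotientGroup.lift _ (Monoid.Coprod.lift f (FreeGroup.lift fun _ => t)) <|
    Subgroup.normalClosure_le_normal <| by
      simp only [higRels, higT, Set.union_subset_iff, Set.iUnion_subset_iff,
        Set.singleton_subset_iff, SetLike.mem_coe, MonoidHom.mem_ker, map_mul, map_inv, map_pow,
        Monoid.Coprod.lift_apply_inl, Monoid.Coprod.lift_apply_inr, FreeGroup.lift_apply_of]
      exact ⟨ht, fun b => mul_inv_eq_one.2 (hf b)⟩

theorem Hig.lift_comp_higIota (f : G →* H) (t : H) (ht : t ^ k = 1)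
    (hf : ∀ b : B, t⁻¹ * f b * t = f (φ b)) :
    (Hig.lift f t ht hf).comp (higIota G A B φ k) = f := by
  ext x
  exact Monoid.Coprod.lift_apply_inl f (FreeGroup.lift fun _ : Unit => t) x

end UniversalProperty

section Embedding

variable {G A B k}

/-- For `k ≤ 2` the offsets `0, 1, -1` are not distinct, and the first matching branch wins. -/
def powerCoord (π : G →* A × B) (j : ZMod k) : G →* G :=
  if j = 0 then MonoidHom.id G
  else if j = 1 then A.subtype.comp (φ.toMonoidHom.comp ((MonoidHom.snd A B).comp π))
  else if j = -1 then B.subtype.comp (φ.symm.toMonoidHom.comp ((MonoidHom.fst A B).comp π))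
  else 1

theorem powerCoord_coe_right (π : G →* A × B) (hπB : ∀ b : B, π (b : G) = (1, b))
    (j : ZMod k) (b : B) :
    powerCoord φ π j (b : G) = if j = 0 then (b : G) else if j = 1 then (φ b : G) else 1 := by
  unfold powerCoord
  split_ifs <;> simp [hπB]

theorem powerCoord_coe_left (π : G →* A × B) (hπA : ∀ a : A, π (a : G) = (a, 1))
    (j : ZMod k) (a : A) :
    powerCoord φ π j (a : G) =
      if j = 0 then (a : G) else if j = 1 then 1 else if j = -1 then (φ.symm a : G) else 1 := by
  unfold powerCoord
  split_ifs <;> simp [hπA]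

theorem powerCoord_coe_eq_powerCoord_sub_one (h2 : (2 : ZMod k) ≠ 0) (π : G →* A × B)
    (hπA : ∀ a : A, π (a : G) = (a, 1)) (hπB : ∀ b : B, π (b : G) = (1, b))
    (j : ZMod k) (b : B) :
    powerCoord φ π j (b : G) = powerCoord φ π (j - 1) (φ b : G) := by
  have h1 : (1 : ZMod k) ≠ 0 := fun h => h2 (by rw [← one_add_one_eq_two, h, add_zero])
  rw [powerCoord_coe_right φ π hπB, powerCoord_coe_left φ π hπA, MulEquiv.symm_apply_apply]
  by_cases hj0 : j = 0
  · have hm1 : (-1 : ZMod k) ≠ 1 := fun h => h2 (by linear_combination -h)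
    simp [hj0, h1, hm1]
  by_cases hj1 : j = 1
  · simp [hj1, h1]
  · have : j - 1 ≠ -1 := by rwa [Ne, sub_eq_neg_self]
    simp [hj0, hj1, sub_eq_zero, this]

def powerEmbedding (π : G →* A × B) (l : ZMod k) : G →* (ZMod k → G) :=
  MonoidHom.pi fun i => powerCoord φ π (i - l)

theorem powerEmbedding_injective (π : G →* A × B) (l : ZMod k) :
    Function.Injective (powerEmbedding φ π l) := by
  intro x y h
  simpa [powerEmbedding, powerCoord] using congrFun h l

theorem powerEmbedding_coe_eq_powerEmbedding_add_one (h2 : (2 : ZMod k) ≠ 0) (π : G →* A × B)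
    (hπA : ∀ a : A, π (a : G) = (a, 1)) (hπB : ∀ b : B, π (b : G) = (1, b))
    (l : ZMod k) (b : B) :
    powerEmbedding φ π l (b : G) = powerEmbedding φ π (l + 1) (φ b : G) := by
  funext i
  simp only [powerEmbedding, MonoidHom.pi_apply, sub_add_eq_sub_sub]
  exact powerCoord_coe_eq_powerCoord_sub_one φ h2 π hπA hπB (i - l) b

theorem cycAut_powerEmbedding (π : G →* A × B) (c l : ZMod k) (x : G) :
    cycAut G k (.ofAdd c) (powerEmbedding φ π l x) = powerEmbedding φ π (l + c) x := by
  funext i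
  show powerCoord φ π (i - c - l) x = powerCoord φ π (i - (l + c)) x
  rw [sub_sub, add_comm]

end Embedding

theorem ZMod.two_ne_zero_of_three_le {k : ℕ} (hk : 3 ≤ k) : (2 : ZMod k) ≠ 0 := by
  intro h
  have := Nat.le_of_dvd two_pos ((ZMod.natCast_eq_zero_iff 2 k).1 (by exact_mod_cast h))
  omega

/-- **Proposition.** If there is `π : G → A × B` with `π(a) = (a,1)` and `π(b) = (1,b)`, then
for every `k ≥ 3` there are homomorphisms `μ̄ : bar-Hig_k(G,φ) → G^k`, injective on each copy
of `G`, and `μ : Hig_k(G,φ) → C_k ⋉ G^k`, injective on `G`. -/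
theorem exists_hom_to_power_and_semidirect
    (π : G →* A × B) (hπA : ∀ a : A, π (a : G) = (a, 1))
    (hπB : ∀ b : B, π (b : G) = (1, b)) (hk : 3 ≤ k) :
    (∃ μbar : BarHig G A B φ k →* (ZMod k → G),
        ∀ l : ZMod k, Function.Injective (μbar.comp (barHigIota G A B φ k l))) ∧
    (∃ μ : Hig G A B φ k →*
        SemidirectProduct (ZMod k → G) (Multiplicative (ZMod k)) (cycAut G k),
        Function.Injective (μ.comp (higIota G A B φ k))) := by
  have hrel := powerEmbedding_coe_eq_powerEmbedding_add_one φ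
    (ZMod.two_ne_zero_of_three_le hk) π hπA hπB
  set t : SemidirectProduct (ZMod k → G) (Multiplicative (ZMod k)) (cycAut G k) :=
    .inr (.ofAdd 1) with ht_def
  have ht : t ^ k = 1 := by
    rw [← map_pow, ← ofAdd_nsmul, nsmul_one, ZMod.natCast_self, ofAdd_zero, map_one]
  have hconj : ∀ b : B, t⁻¹ * (SemidirectProduct.inl.comp (powerEmbedding φ π 0)) b * t =
      (SemidirectProduct.inl.comp (powerEmbedding φ π 0)) (φ b) := by
    intro b
    rw [MonoidHom.comp_apply, MonoidHom.comp_apply, ht_def, ← map_inv,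
      ← SemidirectProduct.inl_aut_inv, ← map_inv, ← ofAdd_neg, cycAut_powerEmbedding, hrel,
      zero_add, neg_add_cancel]
  refine ⟨⟨BarHig.lift (powerEmbedding φ π) hrel, fun l => ?_⟩,
    ⟨Hig.lift _ t ht hconj, ?_⟩⟩
  · rw [BarHig.lift_comp_barHigIota]
    exact powerEmbedding_injective φ π l
  · rw [Hig.lift_comp_higIota]
    exact SemidirectProduct.inl_injective.comp (powerEmbedding_injective φ π 0)
end

section
/- Let S be a finite subset of a group G, let m, n, q, r be non-negative integers with m, n ≥ 1, n = qm + r, q = ⌊n/m⌋ and 0 ≤ r < m, and let η > 0. If α: G → Sym(m) is an (S,η,m)-approximation of G, then the map β: G → Sym(n) obtained by letting β(g) act as α(g) on each of q pairwise disjoint blocks of size m partitioning the first qm points and as the identity on the remaining r points is an (S, η + 1/(q+1), n)-approximation of G. -/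
/-- The block-diagonal permutation of `Fin n`, `n = q·m + r`: it acts as `σ` on each of the
`q` disjoint blocks of size `m` partitioning the first `q·m` points, and as the identity on
the remaining `r` points. -/
def blockPerm {m q r n : ℕ} (h : n = q * m + r) (σ : Equiv.Perm (Fin m)) :
    Equiv.Perm (Fin n) :=
  ((Equiv.sumCongr (finProdFinEquiv (m := q) (n := m)) (Equiv.refl (Fin r))).trans
      (finSumFinEquiv.trans (finCongr h.symm))).permCongr
    (Equiv.sumCongr (Equiv.prodCongr (Equiv.refl (Fin q)) σ) (Equiv.refl (Fin r)))

open Finset Equiv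

section Disagreement

variable {α β : Type*} [Fintype α] [Fintype β] [DecidableEq α] [DecidableEq β]

lemma card_filter_permCongr_ne (e : α ≃ β) (σ τ : Perm α) :
    #{y | e.permCongr σ y ≠ e.permCongr τ y} = #{x | σ x ≠ τ x} :=
  card_equiv (s := {y | e.permCongr σ y ≠ e.permCongr τ y}) e.symm fun y => by
    simp [permCongr_apply]

lemma card_filter_sumCongr_refl_ne (σ τ : Perm α) :
    #{x | sumCongr σ (Equiv.refl β) x ≠ sumCongr τ (Equiv.refl β) x} = #{x | σ x ≠ τ x} := by
  have : ({x | sumCongr σ (Equiv.refl β) x ≠ sumCongr τ (Equiv.refl β) x} : Finset (α ⊕ β)) =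
      ({x | σ x ≠ τ x} : Finset α).map Function.Embedding.inl := by
    ext (x | x) <;> simp
  rw [this, card_map]

lemma card_filter_prodCongr_refl_ne (σ τ : Perm β) :
    #{x | prodCongr (Equiv.refl α) σ x ≠ prodCongr (Equiv.refl α) τ x} =
      Fintype.card α * #{y | σ y ≠ τ y} := by
  have : ({x | prodCongr (Equiv.refl α) σ x ≠ prodCongr (Equiv.refl α) τ x} :
      Finset (α × β)) = (univ : Finset α) ×ˢ ({y | σ y ≠ τ y} : Finset β) := by
    ext ⟨a, b⟩; simp
  rw [this, card_product, card_univ]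

end Disagreement

lemma blockPerm_mul {m q r n : ℕ} (h : n = q * m + r) (σ τ : Perm (Fin m)) :
    blockPerm h (σ * τ) = blockPerm h σ * blockPerm h τ := by
  rw [blockPerm, blockPerm, blockPerm, ← permCongr_mul, Perm.sumCongr_mul]
  rfl

lemma blockPerm_one {m q r n : ℕ} (h : n = q * m + r) :
    blockPerm h (1 : Perm (Fin m)) = 1 := by
  ext x
  simp [blockPerm, permCongr_apply]

lemma card_filter_blockPerm_ne {m q r n : ℕ} (h : n = q * m + r) (σ τ : Perm (Fin m)) :
    #{i | blockPerm h σ i ≠ blockPerm h τ i} = q * #{j | σ j ≠ τ j} := by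
  rw [blockPerm, blockPerm, card_filter_permCongr_ne, card_filter_sumCongr_refl_ne,
    card_filter_prodCongr_refl_ne, Fintype.card_fin]

lemma permDist_nonneg {n : ℕ} (ρ σ : Perm (Fin n)) : 0 ≤ permDist ρ σ := by
  unfold permDist; positivity

lemma permDist_blockPerm {m q r n : ℕ} (h : n = q * m + r) (σ τ : Perm (Fin m)) :
    permDist (blockPerm h σ) (blockPerm h τ) = q * m / n * permDist σ τ := by
  rw [permDist, permDist, card_filter_blockPerm_ne]
  rcases Nat.eq_zero_or_pos m with rfl | hm
  · simp
  · field_simp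
    push_cast
    ring

lemma mul_div_le_one_of_eq_add {m q r n : ℕ} (h : n = q * m + r) : (q * m / n : ℝ) ≤ 1 :=
  div_le_one_of_le₀ (by exact_mod_cast h ▸ Nat.le_add_right _ _) n.cast_nonneg

lemma div_add_one_le_mul_div_of_eq_div {m q n : ℕ} (hq : q = n / m) :
    (q / (q + 1) : ℝ) ≤ q * m / n := by
  rcases Nat.eq_zero_or_pos q with rfl | hq0
  · simp
  have hm : 0 < m := Nat.pos_of_ne_zero fun hm => by simp [hm] at hq; omega
  have hn : n < (q + 1) * m := by rw [hq, add_mul, one_mul]; exact Nat.lt_div_mul_add hm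
  have hn0 : 0 < n := by subst hq; exact Nat.pos_of_ne_zero fun hn => by simp [hn] at hq0
  rw [div_le_div_iff₀ (by positivity) (by exact_mod_cast hn0)]
  have : (n : ℝ) ≤ (q + 1) * m := by exact_mod_cast hn.le
  nlinarith [(Nat.cast_pos.2 hq0 : (0 : ℝ) < q)]

theorem isApprox_blockPerm_general {G : Type*} [Group G] (S : Set G)
    {m n q r : ℕ} (h : n = q * m + r) (hq : q = n / m)
    (η : ℝ) (hη : 0 < η) (α : G → Equiv.Perm (Fin m)) (hα : IsApprox S η α) :
    IsApprox S (η + 1 / (q + 1)) (fun g => blockPerm h (α g)) := by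
  refine ⟨fun g hg g' hg' hgg' => ?_, fun g hg hg1 => ?_⟩
  · rw [← blockPerm_mul, permDist_blockPerm]
    calc _ ≤ permDist (α g * α g') (α (g * g')) :=
          mul_le_of_le_one_left (permDist_nonneg _ _) (mul_div_le_one_of_eq_add h)
      _ < η := hα.1 g hg g' hg' hgg'
      _ < η + 1 / (q + 1) := lt_add_of_pos_right η (by positivity)
  · rw [← blockPerm_one h, permDist_blockPerm]
    have slack : q / (q + 1) * (1 - η) - (1 - (η + 1 / (q + 1))) = η / (q + 1) := by
      field_simp; ring
    calc 1 - (η + 1 / (q + 1)) < q / (q + 1) * (1 - η) := by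
          linarith [div_pos hη (by positivity : (0 : ℝ) < q + 1)]
      _ ≤ q / (q + 1) * permDist (α g) 1 := by gcongr; exact (hα.2 g hg hg1).le
      _ ≤ q * m / n * permDist (α g) 1 :=
          mul_le_mul_of_nonneg_right (div_add_one_le_mul_div_of_eq_div hq) (permDist_nonneg _ _)

/-- **Lemma.** If `n = qm + r` with `q = ⌊n/m⌋` and `α` is an `(S,η,m)`-approximation, then
the block-diagonal map `g ↦ blockPerm (α g)` is an `(S, η + 1/(q+1), n)`-approximation. -/
theorem isApprox_blockPerm {G : Type*} [Group G] (S : Set G) (hS : S.Finite)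
    {m n q r : ℕ} (hm : 1 ≤ m) (hn : 1 ≤ n) (h : n = q * m + r) (hq : q = n / m)
    (η : ℝ) (hη : 0 < η) (α : G → Equiv.Perm (Fin m)) (hα : IsApprox S η α) :
    IsApprox S (η + 1 / (q + 1)) (fun g => blockPerm h (α g)) :=
  isApprox_blockPerm_general S h hq η hη α hα
end
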